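/- arXiv:hep-th/9708077 — 6 statements merged into one kernel-verified Lean document; each statement's English description precedes it below -/
import Mathlib

section
/- Let N ≥ 1 and let V be a real vector space of dimension 6N. Let ω₁, ω₂ be alternating bilinear forms on V with radicals K₁ = rad(ω₁), K₂ = rad(ω₂). Assume: (joint nondegeneracy) K₁ ∩ K₂ = {0}; (mutual flatness) ω₁ vanishes identically on K₂ × K₂ and ω₂ vanishes identically on K₁ × K₁. Then rank(ω₁) ≥ 3N, rank(ω₂) ≥ 3N, and rank(ω₁) + rank(ω₂) ≥ 8N. -/
/-!
Write `Kₐ = ker ωₐ` and `kₐ = dim Kₐ`. Since `ω₁` is alternating, `K₁` is also its right radical,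
so `K₁ ⊔ K₂` is `ω₁`-isotropic by mutual flatness. An isotropic subspace `U` of a form on an
`n`-dimensional space satisfies `2 dim U ≤ n + dim (U ⊓ rad)`; as `K₁ ⊓ K₂ = ⊥` this reads
`2 (k₁ + k₂) ≤ n + k₁`, i.e. `k₁ + 2 k₂ ≤ n`. Symmetrically `2 k₁ + k₂ ≤ n`, and with `n = 6N`
these give `kₐ ≤ 3N` and `k₁ + k₂ ≤ 4N`.
-/

open Module

namespace LinearMap.BilinForm

variable {K V : Type*} [Field K] [AddCommGroup V] [Module K V]

theorem two_mul_finrank_le_of_le_orthogonal [FiniteDimensional K V]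
    {B : LinearMap.BilinForm K V} {U : Submodule K V} (hU : U ≤ B.orthogonal U) :
    2 * finrank K U ≤ finrank K V + finrank K ↥(U ⊓ LinearMap.ker B) := by
  have := finrank_add_finrank_orthogonal' (B := B) U
  have := Submodule.finrank_mono hU
  omega

theorem ker_sup_le_orthogonal_ker_sup {B : LinearMap.BilinForm K V} (hB : B.IsRefl)
    {W : Submodule K V} (hW : W ≤ B.orthogonal W) :
    LinearMap.ker B ⊔ W ≤ B.orthogonal (LinearMap.ker B ⊔ W) := by
  intro v hv u hu
  obtain ⟨a, ha, b, hb, rfl⟩ := Submodule.mem_sup.mp hu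
  obtain ⟨c, hc, d, hd, rfl⟩ := Submodule.mem_sup.mp hv
  have hac : B a = 0 := ha
  have hbc : B b c = 0 := hB _ _ (LinearMap.congr_fun hc b)
  simp [hac, hbc, hW hd b hb]

theorem finrank_ker_add_two_mul_finrank_le_of_le_orthogonal [FiniteDimensional K V]
    {B : LinearMap.BilinForm K V} (hB : B.IsRefl) {W : Submodule K V}
    (hW : W ≤ B.orthogonal W) (hdisj : Disjoint (LinearMap.ker B) W) :
    finrank K (LinearMap.ker B) + 2 * finrank K W ≤ finrank K V := by
  have hsup := Submodule.finrank_sup_add_finrank_inf_eq (LinearMap.ker B) W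
  rw [hdisj.eq_bot, finrank_bot] at hsup
  have hiso := two_mul_finrank_le_of_le_orthogonal (ker_sup_le_orthogonal_ker_sup hB hW)
  rw [inf_of_le_right le_sup_left] at hiso
  omega

end LinearMap.BilinForm

theorem jointly_nondegenerate_mutually_flat_rank_bounds_general
    (N : ℕ)
    (V : Type*) [AddCommGroup V] [Module ℝ V] [FiniteDimensional ℝ V]
    (hdim : Module.finrank ℝ V = 6 * N)
    (ω₁ ω₂ : V →ₗ[ℝ] V →ₗ[ℝ] ℝ)
    (halt₁ : ∀ x : V, ω₁ x x = 0)
    (halt₂ : ∀ x : V, ω₂ x x = 0)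
    (hjoint : LinearMap.ker ω₁ ⊓ LinearMap.ker ω₂ = ⊥)
    (hflat₁ : ∀ x ∈ LinearMap.ker ω₂, ∀ y ∈ LinearMap.ker ω₂, ω₁ x y = 0)
    (hflat₂ : ∀ x ∈ LinearMap.ker ω₁, ∀ y ∈ LinearMap.ker ω₁, ω₂ x y = 0) :
    3 * N ≤ Module.finrank ℝ V - Module.finrank ℝ (LinearMap.ker ω₁) ∧
    3 * N ≤ Module.finrank ℝ V - Module.finrank ℝ (LinearMap.ker ω₂) ∧
    8 * N ≤ (Module.finrank ℝ V - Module.finrank ℝ (LinearMap.ker ω₁)) +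
            (Module.finrank ℝ V - Module.finrank ℝ (LinearMap.ker ω₂)) := by
  have hdisj : Disjoint (LinearMap.ker ω₁) (LinearMap.ker ω₂) := disjoint_iff.mpr hjoint
  have h₁ := LinearMap.BilinForm.finrank_ker_add_two_mul_finrank_le_of_le_orthogonal (B := ω₁)
    (LinearMap.BilinForm.IsAlt.isRefl halt₁) (fun y hy x hx ↦ hflat₁ x hx y hy) hdisj
  have h₂ := LinearMap.BilinForm.finrank_ker_add_two_mul_finrank_le_of_le_orthogonal (B := ω₂)
    (LinearMap.BilinForm.IsAlt.isRefl halt₂) (fun y hy x hx ↦ hflat₂ x hx y hy) hdisj.symm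
  omega

/-- Let `V` be a real vector space of dimension `6N` (with `N ≥ 1`) and
`ω₁, ω₂` alternating bilinear forms with radicals `K₁ = ker ω₁`, `K₂ = ker ω₂`.
If `K₁ ⊓ K₂ = ⊥` (joint nondegeneracy) and each `ωᵃ` vanishes on the radical of the
other one (mutual flatness), then the ranks `rᵃ = dim V − dim Kᵃ` satisfy
`r₁ ≥ 3N`, `r₂ ≥ 3N` and `r₁ + r₂ ≥ 8N`. -/
theorem jointly_nondegenerate_mutually_flat_rank_bounds
    (N : ℕ) (hN : 1 ≤ N)
    (V : Type*) [AddCommGroup V] [Module ℝ V] [FiniteDimensional ℝ V]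
    (hdim : Module.finrank ℝ V = 6 * N)
    (ω₁ ω₂ : V →ₗ[ℝ] V →ₗ[ℝ] ℝ)
    (halt₁ : ∀ x : V, ω₁ x x = 0)
    (halt₂ : ∀ x : V, ω₂ x x = 0)
    (hjoint : LinearMap.ker ω₁ ⊓ LinearMap.ker ω₂ = ⊥)
    (hflat₁ : ∀ x ∈ LinearMap.ker ω₂, ∀ y ∈ LinearMap.ker ω₂, ω₁ x y = 0)
    (hflat₂ : ∀ x ∈ LinearMap.ker ω₁, ∀ y ∈ LinearMap.ker ω₁, ω₂ x y = 0) :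
    3 * N ≤ Module.finrank ℝ V - Module.finrank ℝ (LinearMap.ker ω₁) ∧
    3 * N ≤ Module.finrank ℝ V - Module.finrank ℝ (LinearMap.ker ω₂) ∧
    8 * N ≤ (Module.finrank ℝ V - Module.finrank ℝ (LinearMap.ker ω₁)) +
            (Module.finrank ℝ V - Module.finrank ℝ (LinearMap.ker ω₂)) :=
  jointly_nondegenerate_mutually_flat_rank_bounds_general N V hdim ω₁ ω₂ halt₁ halt₂ hjoint hflat₁
    hflat₂
end

section
/- Fix N ≥ 1. On an open set U ⊆ ℝ^N × ℝ^N × ℝ^N with coordinates (x,u,v), let e_{iα} : U → ℝ be smooth functions depending only on (u,v) (∂e_{iα}/∂x_j = 0), and define for smooth F,G : U → ℝ the brackets B₁(F,G) = Σᵢ (∂F/∂xᵢ · ∂G/∂uᵢ − ∂G/∂xᵢ · ∂F/∂uᵢ) and B₂(F,G) = Σ_{i,α} (∂F/∂xᵢ · e_{iα} · ∂G/∂v_α − ∂G/∂xᵢ · e_{iα} · ∂F/∂v_α). Then every linear combination αB₁ + βB₂ (α, β ∈ ℝ) satisfies the Jacobi identity on U if and only if e satisfies on U: (E1) ∂e_{jα}/∂uᵢ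 = ∂e_{iα}/∂u_j for all i, j, α, and (E2) Σ_α (e_{iα} · ∂e_{jβ}/∂v_α − e_{jα} · ∂e_{iβ}/∂v_α) = 0 for all i, j, β. -/
/-!
Write `D_k = a ∂_{u_k} + b Σ_α e_{kα} ∂_{v_α}`, so that `a B₁ + b B₂ = Σ_k ∂_{x_k} ∧ D_k`. For a
bracket `Σ_k X_k ∧ D_k` whose vector fields pairwise commute, the Jacobi identity is pure algebra:
after expanding with the Leibniz rule, the terms indexed by `(k, i)` and `(i, k)` cancel. The
`∂_{x_i}` commute with each other and, as `e` does not depend on `x`, with every `D_k`, while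
`[D_i, D_k] = b Σ_α c_{ikα} ∂_{v_α}` with
`c_{ikα} = a (∂_{u_i} e_{kα} - ∂_{u_k} e_{iα}) + b Σ_β (e_{iβ} ∂_{v_β} e_{kα} - e_{kβ} ∂_{v_β} e_{iα})`,
which vanishes for all `a, b` under (E1) and (E2). Conversely, the Jacobiator of `(x_i, x_j, v_β)`
is `[D_i, D_j] v_β = b c_{ijβ}`; the choices `(a, b) = (0, 1)` and `(1, 1)` give (E2) and (E1).
-/

/-- The triplectic model space `ℝ^N × ℝ^N × ℝ^N` with coordinates `(x, u, v)`. -/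
abbrev Tri (N : ℕ) := (Fin N → ℝ) × (Fin N → ℝ) × (Fin N → ℝ)

/-- Partial derivative `∂f/∂xᵢ`. -/
noncomputable def dX {N : ℕ} (i : Fin N) (f : Tri N → ℝ) (p : Tri N) : ℝ :=
  fderiv ℝ f p ((fun l => if l = i then 1 else 0), 0, 0)

/-- Partial derivative `∂f/∂uᵢ`. -/
noncomputable def dU {N : ℕ} (i : Fin N) (f : Tri N → ℝ) (p : Tri N) : ℝ :=
  fderiv ℝ f p (0, (fun l => if l = i then 1 else 0), 0)

/-- Partial derivative `∂f/∂vᵢ`. -/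
noncomputable def dV {N : ℕ} (i : Fin N) (f : Tri N → ℝ) (p : Tri N) : ℝ :=
  fderiv ℝ f p (0, 0, (fun l => if l = i then 1 else 0))

/-- The canonical bracket `B₁(F,G) = Σᵢ (∂F/∂xᵢ ∂G/∂uᵢ − ∂G/∂xᵢ ∂F/∂uᵢ)`. -/
noncomputable def bracket1 {N : ℕ} (F G : Tri N → ℝ) (p : Tri N) : ℝ :=
  ∑ i, (dX i F p * dU i G p - dX i G p * dU i F p)

/-- The weakly canonical bracket
`B₂(F,G) = Σ_{i,α} (∂F/∂xᵢ e_{iα} ∂G/∂v_α − ∂G/∂xᵢ e_{iα} ∂F/∂v_α)`. -/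
noncomputable def bracket2 {N : ℕ} (e : Fin N → Fin N → Tri N → ℝ)
    (F G : Tri N → ℝ) (p : Tri N) : ℝ :=
  ∑ i, ∑ α, (dX i F p * e i α p * dV α G p - dX i G p * e i α p * dV α F p)

/-- The linear combination `a•B₁ + b•B₂` of the two brackets. -/
noncomputable def bracketComb {N : ℕ} (e : Fin N → Fin N → Tri N → ℝ) (a b : ℝ)
    (F G : Tri N → ℝ) : Tri N → ℝ :=
  fun p => a * bracket1 F G p + b * bracket2 e F G p

/-- `ev ∘ Y` is a derivation of `A` into `R`, the latter an `A`-module through `ev`. -/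
structure IsDerivationAt {A R : Type*} [CommRing A] [CommRing R] (ev : A →+* R) (Y : A → A) :
    Prop where
  map_add : ∀ f g, ev (Y (f + g)) = ev (Y f) + ev (Y g)
  map_mul : ∀ f g, ev (Y (f * g)) = ev (Y f) * ev g + ev f * ev (Y g)

namespace IsDerivationAt

variable {A R : Type*} [CommRing A] [CommRing R] {ev : A →+* R} {Y : A → A}

lemma map_zero (hY : IsDerivationAt ev Y) : ev (Y 0) = 0 := by
  simpa using hY.map_add 0 0

lemma map_neg (hY : IsDerivationAt ev Y) (f : A) : ev (Y (-f)) = -ev (Y f) := by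
  have h := hY.map_add f (-f)
  rw [add_neg_cancel, hY.map_zero] at h
  linear_combination -h

lemma map_sub (hY : IsDerivationAt ev Y) (f g : A) : ev (Y (f - g)) = ev (Y f) - ev (Y g) := by
  rw [sub_eq_add_neg, hY.map_add, hY.map_neg, sub_eq_add_neg]

lemma map_sum (hY : IsDerivationAt ev Y) {κ : Type*} (s : Finset κ) (f : κ → A) :
    ev (Y (∑ j ∈ s, f j)) = ∑ j ∈ s, ev (Y (f j)) :=
  _root_.map_sum (⟨⟨fun g => ev (Y g), hY.map_zero⟩, hY.map_add⟩ : A →+ R) f s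

end IsDerivationAt

lemma Finset.sum_sum_eq_zero_of_antisymm {ι M : Type*} [Fintype ι] [AddCommMonoid M]
    [IsAddTorsionFree M] {T : ι → ι → M} (hT : ∀ k i, T k i + T i k = 0) :
    ∑ k, ∑ i, T k i = 0 := by
  rw [← two_nsmul_eq_zero, two_nsmul]
  nth_rw 2 [Finset.sum_comm]
  simp only [← Finset.sum_add_distrib, hT, Finset.sum_const_zero]

namespace WedgeBracket

variable {ι A R : Type*} [Fintype ι] [CommRing A] [CommRing R]

def bracket (X D : ι → A → A) (f g : A) : A := ∑ i, (X i f * D i g - X i g * D i f)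

def jacobiator (X D : ι → A → A) (f g h : A) : A :=
  bracket X D f (bracket X D g h) + bracket X D g (bracket X D h f)
    + bracket X D h (bracket X D f g)

variable {X D : ι → A → A} {ev : A →+* R}

lemma map_bracket (ev : A →+* R) (f g : A) :
    ev (bracket X D f g) = ∑ i, (ev (X i f) * ev (D i g) - ev (X i g) * ev (D i f)) := by
  simp only [bracket, map_sum, map_sub, map_mul]

lemma _root_.IsDerivationAt.map_bracket {Y : A → A} (hY : IsDerivationAt ev Y) (f g : A) :
    ev (Y (bracket X D f g)) = ∑ i, (ev (Y (X i f)) * ev (D i g) + ev (X i f) * ev (Y (D i g))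
      - (ev (Y (X i g)) * ev (D i f) + ev (X i g) * ev (Y (D i f)))) := by
  simp only [bracket, hY.map_sum, hY.map_sub, hY.map_mul]

theorem map_jacobiator_eq_zero [IsAddTorsionFree R]
    (hX : ∀ k, IsDerivationAt ev (X k)) (hD : ∀ k, IsDerivationAt ev (D k))
    (hXX : ∀ k i f, ev (X k (X i f)) = ev (X i (X k f)))
    (hXD : ∀ k i f, ev (X k (D i f)) = ev (D i (X k f)))
    (hDD : ∀ k i f, ev (D k (D i f)) = ev (D i (D k f))) (f g h : A) :
    ev (jacobiator X D f g h) = 0 := by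
  simp only [jacobiator, map_add, map_bracket, (hX _).map_bracket, (hD _).map_bracket,
    Finset.mul_sum, Finset.sum_mul, ← Finset.sum_sub_distrib, ← Finset.sum_add_distrib]
  refine Finset.sum_sum_eq_zero_of_antisymm fun k i => ?_
  simp only [hXX i k, hDD i k, hXD k i, hXD i k]
  ring

theorem map_jacobiator_coord [DecidableEq ι]
    (hX : ∀ k, IsDerivationAt ev (X k)) (hD : ∀ k, IsDerivationAt ev (D k))
    {c : ι → A} (hXc : ∀ k i, X k (c i) = if i = k then 1 else 0) (hDc : ∀ k i, D k (c i) = 0)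
    (i j : ι) (f : A) :
    ev (jacobiator X D (c i) (c j) f) = ev (D i (D j f)) - ev (D j (D i f)) := by
  have hleft : ∀ i g, bracket X D (c i) g = D i g := fun i g => by
    simp [bracket, hXc, hDc]
  have hright : ∀ i g, bracket X D g (c i) = -D i g := fun i g => by
    simp [bracket, hXc, hDc]
  simp only [jacobiator, hleft, hright, hDc, map_add, map_bracket, (hD _).map_neg,
    (hX _).map_zero, (hD _).map_zero, mul_zero, zero_mul, sub_zero, Finset.sum_const_zero]
  ring

end WedgeBracket

open scoped ContDiff
open VectorField

noncomputable section

section SmoothFunctions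

variable {E : Type*} [NormedAddCommGroup E] [NormedSpace ℝ E] {U : Set E} {p : E}

lemma ContDiffOn.differentiableAt_of_isOpen {F : Type*} [NormedAddCommGroup F]
    [NormedSpace ℝ F] {n : ℕ∞ω} {f : E → F} (hf : ContDiffOn ℝ n f U) (hn : n ≠ 0)
    (hU : IsOpen U) (hp : p ∈ U) : DifferentiableAt ℝ f p :=
  (hf.differentiableOn hn).differentiableAt (hU.mem_nhds hp)

def fieldDeriv (V : E → E) (f : E → ℝ) : E → ℝ := fun q => fderiv ℝ f q (V q)

variable {V W : E → E}

lemma ContDiffOn.fieldDeriv (hU : IsOpen U) (hV : ContDiffOn ℝ ∞ V U) {f : E → ℝ}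
    (hf : ContDiffOn ℝ ∞ f U) : ContDiffOn ℝ ∞ (fieldDeriv V f) U :=
  (hf.fderiv_of_isOpen hU le_rfl).clm_apply hV

lemma fieldDeriv_sub_fieldDeriv {f : E → ℝ} (hf : ContDiffAt ℝ 2 f p)
    (hV : DifferentiableAt ℝ V p) (hW : DifferentiableAt ℝ W p) :
    fieldDeriv V (fieldDeriv W f) p - fieldDeriv W (fieldDeriv V f) p
      = fderiv ℝ f p (lieBracket ℝ V W p) :=
  (fderiv_apply_lieBracket hf (by simp) hW hV).symm

def smoothFunctionsOn (U : Set E) : Subalgebra ℝ (E → ℝ) where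
  carrier := {f | ContDiffOn ℝ ∞ f U}
  mul_mem' hf hg := hf.mul hg
  add_mem' hf hg := hf.add hg
  algebraMap_mem' _ := contDiffOn_const

namespace smoothFunctionsOn

def evalAt (U : Set E) (p : E) : smoothFunctionsOn U →+* ℝ :=
  (Pi.evalRingHom (fun _ : E => ℝ) p).comp (smoothFunctionsOn U).val.toRingHom

@[simp] lemma evalAt_apply (f : smoothFunctionsOn U) : evalAt U p f = (f : E → ℝ) p := rfl

def fieldDerivOp (hU : IsOpen U) (hV : ContDiffOn ℝ ∞ V U) (f : smoothFunctionsOn U) :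
    smoothFunctionsOn U :=
  ⟨_root_.fieldDeriv V f, ContDiffOn.fieldDeriv hU hV f.2⟩

@[simp] lemma coe_fieldDerivOp (hU : IsOpen U) (hV : ContDiffOn ℝ ∞ V U)
    (f : smoothFunctionsOn U) : (fieldDerivOp hU hV f : E → ℝ) = _root_.fieldDeriv V f := rfl

variable {hU : IsOpen U}

lemma isDerivationAt_fieldDerivOp (hV : ContDiffOn ℝ ∞ V U) (hp : p ∈ U) :
    IsDerivationAt (evalAt U p) (fieldDerivOp hU hV) where
  map_add f g := by
    simp [_root_.fieldDeriv, fderiv_add (f.2.differentiableAt_of_isOpen (by simp) hU hp)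
      (g.2.differentiableAt_of_isOpen (by simp) hU hp)]
  map_mul f g := by
    simp [_root_.fieldDeriv, fderiv_mul (f.2.differentiableAt_of_isOpen (by simp) hU hp)
      (g.2.differentiableAt_of_isOpen (by simp) hU hp), mul_comm, add_comm]

lemma evalAt_fieldDerivOp_comm (hV : ContDiffOn ℝ ∞ V U) (hW : ContDiffOn ℝ ∞ W U) (hp : p ∈ U)
    (hVW : lieBracket ℝ V W p = 0) (f : smoothFunctionsOn U) :
    evalAt U p (fieldDerivOp hU hV (fieldDerivOp hU hW f))
      = evalAt U p (fieldDerivOp hU hW (fieldDerivOp hU hV f)) := by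
  have h := fieldDeriv_sub_fieldDeriv ((f.2.contDiffAt (hU.mem_nhds hp)).of_le ENat.LEInfty.out)
    (hV.differentiableAt_of_isOpen (by simp) hU hp) (hW.differentiableAt_of_isOpen (by simp) hU hp)
  rwa [hVW, map_zero, sub_eq_zero] at h

end smoothFunctionsOn

end SmoothFunctions

variable {N : ℕ}

def xDir (i : Fin N) : Tri N := ((fun l => if l = i then 1 else 0), 0, 0)
def uDir (i : Fin N) : Tri N := (0, (fun l => if l = i then 1 else 0), 0)
def vDir (i : Fin N) : Tri N := (0, 0, (fun l => if l = i then 1 else 0))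

def xCoord (i : Fin N) : Tri N →L[ℝ] ℝ :=
  (ContinuousLinearMap.proj i).comp (ContinuousLinearMap.fst ℝ _ _)

def vCoord (i : Fin N) : Tri N →L[ℝ] ℝ :=
  (ContinuousLinearMap.proj i).comp
    ((ContinuousLinearMap.snd ℝ _ _).comp (ContinuousLinearMap.snd ℝ _ _))

def dField (e : Fin N → Fin N → Tri N → ℝ) (a b : ℝ) (k : Fin N) : Tri N → Tri N :=
  fun q => a • uDir k + b • ∑ α, e k α q • vDir α

variable {e : Fin N → Fin N → Tri N → ℝ} {a b : ℝ} {p : Tri N}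

lemma fieldDeriv_dField (k : Fin N) (f : Tri N → ℝ) (q : Tri N) :
    fieldDeriv (dField e a b k) f q = a * dU k f q + b * ∑ α, e k α q * dV α f q := by
  simp only [fieldDeriv, dField, map_add, map_smul, map_sum, smul_eq_mul]
  rfl

lemma bracketComb_eq_sum_fieldDeriv (F G : Tri N → ℝ) (q : Tri N) :
    bracketComb e a b F G q = ∑ i, (dX i F q * fieldDeriv (dField e a b i) G q
      - dX i G q * fieldDeriv (dField e a b i) F q) := by
  simp only [bracketComb, bracket1, bracket2, fieldDeriv_dField, mul_add, mul_sub,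
    Finset.mul_sum, Finset.sum_add_distrib, Finset.sum_sub_distrib]
  ring_nf

lemma contDiffOn_dField {U : Set (Tri N)} (he : ∀ i α, ContDiffOn ℝ ∞ (e i α) U) (a b : ℝ)
    (k : Fin N) : ContDiffOn ℝ ∞ (dField e a b k) U := by
  unfold dField
  fun_prop

lemma fderiv_dField_apply {k : Fin N} (he : ∀ α, DifferentiableAt ℝ (e k α) p) (v : Tri N) :
    fderiv ℝ (dField e a b k) p v = b • ∑ α, fderiv ℝ (e k α) p v • vDir α := by
  have h : HasFDerivAt (dField e a b k)
      (b • ∑ α, (fderiv ℝ (e k α) p).smulRight (vDir α)) p :=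
    ((HasFDerivAt.fun_sum fun α _ => (he α).hasFDerivAt.smul_const (vDir α)).const_smul
      b).const_add _
  simp [h.fderiv]

lemma lieBracket_xDir_dField {i k : Fin N} (he : ∀ α, DifferentiableAt ℝ (e k α) p) :
    lieBracket ℝ (fun _ => xDir i) (dField e a b k) p = b • ∑ α, dX i (e k α) p • vDir α := by
  simp only [lieBracket, fderiv_dField_apply he, fderiv_fun_const, Pi.zero_apply,
    zero_apply, sub_zero]
  rfl

lemma lieBracket_dField {i k : Fin N} (he : ∀ i α, DifferentiableAt ℝ (e i α) p) :
    lieBracket ℝ (dField e a b i) (dField e a b k) p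
      = b • ∑ α, (fieldDeriv (dField e a b i) (e k α) p
          - fieldDeriv (dField e a b k) (e i α) p) • vDir α := by
  simp only [lieBracket, fderiv_dField_apply (he _), fieldDeriv, ← smul_sub,
    ← Finset.sum_sub_distrib, sub_smul]

lemma fieldDeriv_dField_sub (i k α : Fin N) (p : Tri N) :
    fieldDeriv (dField e a b i) (e k α) p - fieldDeriv (dField e a b k) (e i α) p
      = a * (dU i (e k α) p - dU k (e i α) p)
        + b * ∑ β, (e i β p * dV β (e k α) p - e k β p * dV β (e i α) p) := by
  simp only [fieldDeriv_dField, Finset.sum_sub_distrib]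
  ring

section Operators

open smoothFunctionsOn WedgeBracket

variable {U : Set (Tri N)} (hU : IsOpen U) (he : ∀ i α, ContDiffOn ℝ ∞ (e i α) U) (a b : ℝ)

def xOp (i : Fin N) : smoothFunctionsOn U → smoothFunctionsOn U :=
  fieldDerivOp hU (V := fun _ => xDir i) contDiffOn_const

def dOp (k : Fin N) : smoothFunctionsOn U → smoothFunctionsOn U :=
  fieldDerivOp hU (contDiffOn_dField he a b k)

lemma coe_bracket_xOp_dOp (f g : smoothFunctionsOn U) :
    ((bracket (xOp hU) (dOp hU he a b) f g : smoothFunctionsOn U) : Tri N → ℝ)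
      = bracketComb e a b f g := by
  funext q
  rw [bracketComb_eq_sum_fieldDeriv]
  simp only [bracket, xOp, dOp, AddSubmonoidClass.coe_finsetSum, AddSubgroupClass.coe_sub,
    MulMemClass.coe_mul, coe_fieldDerivOp, Finset.sum_apply, Pi.sub_apply, Pi.mul_apply]
  rfl

lemma jacobiator_eq_evalAt (p : Tri N) (F G H : smoothFunctionsOn U) :
    bracketComb e a b F (bracketComb e a b G H) p + bracketComb e a b G (bracketComb e a b H F) p
      + bracketComb e a b H (bracketComb e a b F G) p
      = evalAt U p (jacobiator (xOp hU) (dOp hU he a b) F G H) := by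
  simp only [jacobiator, map_add, evalAt_apply, coe_bracket_xOp_dOp]

variable {hU he a b}

lemma isDerivationAt_xOp (hp : p ∈ U) (i : Fin N) : IsDerivationAt (evalAt U p) (xOp hU i) :=
  isDerivationAt_fieldDerivOp _ hp

lemma isDerivationAt_dOp (hp : p ∈ U) (k : Fin N) :
    IsDerivationAt (evalAt U p) (dOp hU he a b k) :=
  isDerivationAt_fieldDerivOp _ hp

def coordOn (L : Tri N →L[ℝ] ℝ) : smoothFunctionsOn U := ⟨L, L.contDiff.contDiffOn⟩

lemma jacobiator_coord (hp : p ∈ U) (i j β : Fin N) :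
    evalAt U p (jacobiator (xOp hU) (dOp hU he a b)
        (coordOn (xCoord i)) (coordOn (xCoord j)) (coordOn (vCoord β)))
      = b * (a * (dU i (e j β) p - dU j (e i β) p)
          + b * ∑ α, (e i α p * dV α (e j β) p - e j α p * dV α (e i β) p)) := by
  have hXc : ∀ k i, xOp hU k (coordOn (xCoord i)) = if i = k then 1 else 0 := fun k i => by
    ext q
    by_cases h : i = k <;> simp [xOp, coordOn, fieldDeriv, xCoord, xDir, h]
  have hDc : ∀ k i, dOp hU he a b k (coordOn (xCoord i)) = 0 := fun k i => by
    ext q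
    simp [dOp, coordOn, fieldDeriv, xCoord, dField, uDir, vDir, Prod.fst_sum]
  have hed : ∀ i α, DifferentiableAt ℝ (e i α) p := fun i α =>
    (he i α).differentiableAt_of_isOpen (by simp) hU hp
  have hdD : ∀ k, DifferentiableAt ℝ (dField e a b k) p := fun k =>
    (contDiffOn_dField he a b k).differentiableAt_of_isOpen (by simp) hU hp
  rw [map_jacobiator_coord (isDerivationAt_xOp hp) (isDerivationAt_dOp hp) hXc hDc]
  simp only [evalAt_apply, dOp, coe_fieldDerivOp, coordOn]
  rw [fieldDeriv_sub_fieldDeriv (vCoord β).contDiff.contDiffAt (hdD i) (hdD j),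
    ContinuousLinearMap.fderiv, lieBracket_dField hed]
  simp [vCoord, vDir, fieldDeriv_dField_sub]

lemma jacobiator_eq_zero_of_econd (hp : p ∈ U)
    (hex : ∀ i α j, dX j (e i α) p = 0)
    (hE1 : ∀ i j α, dU i (e j α) p = dU j (e i α) p)
    (hE2 : ∀ i j β, ∑ α, (e i α p * dV α (e j β) p - e j α p * dV α (e i β) p) = 0)
    (F G H : smoothFunctionsOn U) :
    evalAt U p (jacobiator (xOp hU) (dOp hU he a b) F G H) = 0 := by
  have hed : ∀ i α, DifferentiableAt ℝ (e i α) p := fun i α =>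
    (he i α).differentiableAt_of_isOpen (by simp) hU hp
  refine map_jacobiator_eq_zero (isDerivationAt_xOp hp) (isDerivationAt_dOp hp) ?_ ?_ ?_ F G H
  · intro k i f
    exact evalAt_fieldDerivOp_comm _ _ hp (by simp [lieBracket]) f
  · intro k i f
    exact evalAt_fieldDerivOp_comm _ _ hp (by simp [lieBracket_xDir_dField (hed i), hex]) f
  · intro k i f
    exact evalAt_fieldDerivOp_comm _ _ hp
      (by simp [lieBracket_dField hed, fieldDeriv_dField_sub, hE1 k i, hE2 k i]) f

end Operators

end

theorem weakly_canonical_jacobi_iff_econd_general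
    (N : ℕ)
    (U : Set (Tri N)) (hU : IsOpen U)
    (e : Fin N → Fin N → Tri N → ℝ)
    (hesmooth : ∀ i α, ContDiffOn ℝ (⊤ : ℕ∞) (e i α) U)
    (hex : ∀ i α j, ∀ p ∈ U, dX j (e i α) p = 0) :
    (∀ a b : ℝ, ∀ F G H : Tri N → ℝ,
        ContDiff ℝ (⊤ : ℕ∞) F → ContDiff ℝ (⊤ : ℕ∞) G → ContDiff ℝ (⊤ : ℕ∞) H →
        ∀ p ∈ U,
          bracketComb e a b F (bracketComb e a b G H) p +
          bracketComb e a b G (bracketComb e a b H F) p +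
          bracketComb e a b H (bracketComb e a b F G) p = 0)
    ↔
    ((∀ i j α, ∀ p ∈ U, dU i (e j α) p = dU j (e i α) p) ∧
     (∀ i j β, ∀ p ∈ U,
        ∑ α, (e i α p * dV α (e j β) p - e j α p * dV α (e i β) p) = 0)) := by
  constructor
  · intro hjac
    have hcoord : ∀ a b i j β, ∀ p ∈ U, b * (a * (dU i (e j β) p - dU j (e i β) p)
        + b * ∑ α, (e i α p * dV α (e j β) p - e j α p * dV α (e i β) p)) = 0 :=
      fun a b i j β p hp => by
        rw [← jacobiator_coord (hU := hU) (he := hesmooth) hp, ← jacobiator_eq_evalAt]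
        exact hjac a b _ _ _ (xCoord i).contDiff (xCoord j).contDiff (vCoord β).contDiff p hp
    have hE2 : ∀ i j β, ∀ p ∈ U,
        ∑ α, (e i α p * dV α (e j β) p - e j α p * dV α (e i β) p) = 0 :=
      fun i j β p hp => by simpa using hcoord 0 1 i j β p hp
    refine ⟨fun i j α p hp => ?_, hE2⟩
    have h := hcoord 1 1 i j α p hp
    rw [hE2 i j α p hp] at h
    linarith
  · rintro ⟨hE1, hE2⟩ a b F G H hF hG hH p hp
    rw [jacobiator_eq_evalAt hU hesmooth a b p ⟨F, hF.contDiffOn⟩ ⟨G, hG.contDiffOn⟩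
      ⟨H, hH.contDiffOn⟩]
    exact jacobiator_eq_zero_of_econd hp (fun i α j => hex i α j p hp)
      (fun i j α => hE1 i j α p hp) (fun i j β => hE2 i j β p hp) _ _ _

/-- For the weakly canonical brackets `B₁`, `B₂` built from a smooth matrix
`e_{iα}` depending only on `(u,v)`, every linear combination `a•B₁ + b•B₂` satisfies the
Jacobi identity on `U` if and only if `e` satisfies
(E1) `∂e_{jα}/∂uᵢ = ∂e_{iα}/∂uⱼ` and
(E2) `Σ_α (e_{iα} ∂e_{jβ}/∂v_α − e_{jα} ∂e_{iβ}/∂v_α) = 0` on `U`. -/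
theorem weakly_canonical_jacobi_iff_econd
    (N : ℕ) (hN : 1 ≤ N)
    (U : Set (Tri N)) (hU : IsOpen U)
    (e : Fin N → Fin N → Tri N → ℝ)
    (hesmooth : ∀ i α, ContDiffOn ℝ (⊤ : ℕ∞) (e i α) U)
    (hex : ∀ i α j, ∀ p ∈ U, dX j (e i α) p = 0) :
    (∀ a b : ℝ, ∀ F G H : Tri N → ℝ,
        ContDiff ℝ (⊤ : ℕ∞) F → ContDiff ℝ (⊤ : ℕ∞) G → ContDiff ℝ (⊤ : ℕ∞) H →
        ∀ p ∈ U,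
          bracketComb e a b F (bracketComb e a b G H) p +
          bracketComb e a b G (bracketComb e a b H F) p +
          bracketComb e a b H (bracketComb e a b F G) p = 0)
    ↔
    ((∀ i j α, ∀ p ∈ U, dU i (e j α) p = dU j (e i α) p) ∧
     (∀ i j β, ∀ p ∈ U,
        ∑ α, (e i α p * dV α (e j β) p - e j α p * dV α (e i β) p) = 0)) :=
  weakly_canonical_jacobi_iff_econd_general N U hU e hesmooth hex
end

section
/- Fix N ≥ 1 and let U = X × W where X ⊆ ℝ^N and W ⊆ ℝ^{2N} are convex open sets, with coordinates (x, u, v) (x, u, v ∈ ℝ^N), the last 2N coordinates being (u, v). Let η_{ij} : U → ℝ (1 ≤ i,j ≤ N) be smooth with η_{ij} = −η_{ji}, and define the bracket B(F,G) = Σᵢ (∂F/∂xᵢ · ∂G/∂uᵢ − ∂G/∂xᵢ · ∂F/∂uᵢ) + Σ_{i,j} ∂F/∂xᵢ · η_{ij} · ∂G/∂x_j for smooth F,G : U → ℝ. Then B satisfies the Jacobi identity on U if and only if (a) η_{ij} is independent of x (∂η_{ij}/∂x_k = 0 for all i,j,k), and (b) the cyclic closedness condition ∂η_{jk}/∂u_i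 + ∂η_{ki}/∂u_j + ∂η_{ij}/∂u_k = 0 holds on U for all i,j,k. -/
/-- The bracket `B(F,G) = Σᵢ (∂F/∂xᵢ ∂G/∂uᵢ − ∂G/∂xᵢ ∂F/∂uᵢ) + Σ_{i,j} ∂F/∂xᵢ η_{ij} ∂G/∂xⱼ`. -/
noncomputable def bracketEta {N : ℕ} (η : Fin N → Fin N → Tri N → ℝ)
    (F G : Tri N → ℝ) (p : Tri N) : ℝ :=
  (∑ i, (dX i F p * dU i G p - dX i G p * dU i F p)) +
  ∑ i, ∑ j, dX i F p * η i j p * dX j G p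

namespace JacobiAux

variable {N : ℕ}


section Perm

lemma s12 (f : Fin N → Fin N → Fin N → ℝ) :
    (∑ a, ∑ b, ∑ c, f a b c) = ∑ a, ∑ b, ∑ c, f b a c := Finset.sum_comm

lemma s23 (f : Fin N → Fin N → Fin N → ℝ) :
    (∑ a, ∑ b, ∑ c, f a b c) = ∑ a, ∑ b, ∑ c, f a c b :=
  Finset.sum_congr rfl fun _ _ => Finset.sum_comm

lemma rot3 (f : Fin N → Fin N → Fin N → ℝ) :
    (∑ a, ∑ b, ∑ c, f a b c) = ∑ a, ∑ b, ∑ c, f b c a :=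
  (s23 f).trans (s12 fun a b c => f a c b)

lemma rot3' (f : Fin N → Fin N → Fin N → ℝ) :
    (∑ a, ∑ b, ∑ c, f a b c) = ∑ a, ∑ b, ∑ c, f c a b :=
  (s12 f).trans (s23 fun a b c => f b a c)

lemma s13 (f : Fin N → Fin N → Fin N → ℝ) :
    (∑ a, ∑ b, ∑ c, f a b c) = ∑ a, ∑ b, ∑ c, f c b a :=
  ((s12 f).trans (s23 fun a b c => f b a c)).trans (s12 fun a b c => f c a b)

lemma s12_4 (f : Fin N → Fin N → Fin N → Fin N → ℝ) :
    (∑ a, ∑ b, ∑ c, ∑ d, f a b c d) = ∑ a, ∑ b, ∑ c, ∑ d, f b a c d := Finset.sum_comm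

lemma s23_4 (f : Fin N → Fin N → Fin N → Fin N → ℝ) :
    (∑ a, ∑ b, ∑ c, ∑ d, f a b c d) = ∑ a, ∑ b, ∑ c, ∑ d, f a c b d :=
  Finset.sum_congr rfl fun _ _ => Finset.sum_comm

lemma s34_4 (f : Fin N → Fin N → Fin N → Fin N → ℝ) :
    (∑ a, ∑ b, ∑ c, ∑ d, f a b c d) = ∑ a, ∑ b, ∑ c, ∑ d, f a b d c :=
  Finset.sum_congr rfl fun _ _ => Finset.sum_congr rfl fun _ _ => Finset.sum_comm

lemma perm4 (f : Fin N → Fin N → Fin N → Fin N → ℝ) :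
    (∑ a, ∑ b, ∑ c, ∑ d, f a b c d) = ∑ a, ∑ b, ∑ c, ∑ d, f d c a b :=
  ((((s12_4 f).trans (s23_4 fun a b c d => f b a c d)).trans
    (s12_4 fun a b c d => f c a b d)).trans
    (s34_4 fun a b c d => f c b a d)).trans
    (s23_4 fun a b c d => f d b a c)

end Perm

section Pairs

variable (a b : Fin N → ℝ) (M S U : Fin N → Fin N → ℝ)
  (e : Fin N → Fin N → ℝ) (hh : Fin N → Fin N → Fin N → ℝ)

lemma W1 (hU : ∀ p q, U p q = U q p) :
    (∑ x, ∑ i, a x * (b i * U i x)) = ∑ x, ∑ i, b x * (a i * U i x) := by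
  rw [Finset.sum_comm]
  exact Finset.sum_congr rfl fun p _ => Finset.sum_congr rfl fun q _ => by
    linear_combination (a q * b p) * hU p q

lemma W2 : (∑ x, ∑ i, a x * (b i * M i x)) = ∑ x, ∑ i, a i * M x i * b x := by
  rw [Finset.sum_comm]
  exact Finset.sum_congr rfl fun p _ => Finset.sum_congr rfl fun q _ => by ring

lemma W3 (hS : ∀ p q, S p q = S q p) :
    (∑ x, ∑ i, a i * S i x * b x) = ∑ x, ∑ i, b i * S i x * a x := by
  rw [Finset.sum_comm]
  exact Finset.sum_congr rfl fun p _ => Finset.sum_congr rfl fun q _ => by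
    linear_combination (a p * b q) * hS p q

lemma W4 : (∑ x, ∑ y, ∑ i, a x * (b y * e y i * M i x))
    = ∑ x, ∑ y, ∑ i, b x * e x y * (a i * M y i) := by
  rw [rot3' fun x y i => a x * (b y * e y i * M i x)]
  exact Finset.sum_congr rfl fun p _ => Finset.sum_congr rfl fun q _ =>
    Finset.sum_congr rfl fun r _ => by ring

lemma W5 (he : ∀ p q, e p q = - e q p) :
    (∑ x, ∑ y, ∑ i, a x * (b i * (e y i * M y x)))
    + (∑ x, ∑ y, ∑ i, b x * e x y * (a i * M y i)) = 0 := by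
  rw [s13 fun x y i => a x * (b i * (e y i * M y x))]
  rw [← Finset.sum_add_distrib]
  refine Finset.sum_eq_zero fun p _ => ?_
  rw [← Finset.sum_add_distrib]
  refine Finset.sum_eq_zero fun q _ => ?_
  rw [← Finset.sum_add_distrib]
  refine Finset.sum_eq_zero fun r _ => ?_
  linear_combination (a r * b p * M q r) * he q p

lemma W6 (hS : ∀ p q, S p q = S q p) :
    (∑ x, ∑ y, ∑ i, a y * e y i * S i x * b x)
    = ∑ x, ∑ y, ∑ i, a x * e x y * (b i * S i y) := by
  rw [rot3' fun x y i => a y * e y i * S i x * b x]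
  exact Finset.sum_congr rfl fun p _ => Finset.sum_congr rfl fun q _ =>
    Finset.sum_congr rfl fun r _ => by
      linear_combination (a p * e p q * b r) * hS q r

lemma W7 (he : ∀ p q, e p q = - e q p) (hS : ∀ p q, S p q = S q p) :
    (∑ x, ∑ y, ∑ i, b i * e y i * S y x * a x)
    + (∑ x, ∑ y, ∑ i, b x * e x y * (a i * S i y)) = 0 := by
  rw [s13 fun x y i => b i * e y i * S y x * a x]
  rw [← Finset.sum_add_distrib]
  refine Finset.sum_eq_zero fun p _ => ?_
  rw [← Finset.sum_add_distrib]
  refine Finset.sum_eq_zero fun q _ => ?_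
  rw [← Finset.sum_add_distrib]
  refine Finset.sum_eq_zero fun r _ => ?_
  linear_combination (b p * a r * S q r) * he q p - (b p * e p q * a r) * hS q r

lemma W8 (he : ∀ p q, e p q = - e q p) (hS : ∀ p q, S p q = S q p) :
    (∑ x, ∑ y, ∑ z, ∑ i, a x * e x y * (b z * e z i * S i y))
    + (∑ x, ∑ y, ∑ z, ∑ i, b x * e x y * (a i * e z i * S z y)) = 0 := by
  rw [perm4 fun x y z i => a x * e x y * (b z * e z i * S i y)]
  rw [← Finset.sum_add_distrib]
  refine Finset.sum_eq_zero fun p _ => ?_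
  rw [← Finset.sum_add_distrib]
  refine Finset.sum_eq_zero fun q _ => ?_
  rw [← Finset.sum_add_distrib]
  refine Finset.sum_eq_zero fun r _ => ?_
  rw [← Finset.sum_add_distrib]
  refine Finset.sum_eq_zero fun s _ => ?_
  linear_combination (a s * b p * e p q * S q r) * he s r
    - (b p * e p q * a s * e r s) * hS q r

lemma W9 (c : Fin N → ℝ) (hcyc : ∀ p q r, hh p q r + hh q r p + hh r p q = 0) :
    (∑ x, ∑ y, ∑ i, a x * (c i * (b y * hh x y i)))
    + (∑ x, ∑ y, ∑ i, b x * (a i * (c y * hh x y i)))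
    + (∑ x, ∑ y, ∑ i, c x * (b i * (a y * hh x y i))) = 0 := by
  rw [rot3 fun x y i => b x * (a i * (c y * hh x y i)),
    rot3' fun x y i => c x * (b i * (a y * hh x y i))]
  rw [← Finset.sum_add_distrib, ← Finset.sum_add_distrib]
  refine Finset.sum_eq_zero fun p _ => ?_
  rw [← Finset.sum_add_distrib, ← Finset.sum_add_distrib]
  refine Finset.sum_eq_zero fun q _ => ?_
  rw [← Finset.sum_add_distrib, ← Finset.sum_add_distrib]
  refine Finset.sum_eq_zero fun r _ => ?_
  linear_combination (a p * b q * c r) * hcyc p q r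

end Pairs

section Master

noncomputable def DXBd (Gx Gu Hx Hu : Fin N → ℝ) (mG mH XG XH : Fin N → Fin N → ℝ)
    (e : Fin N → Fin N → ℝ) (l : Fin N) : ℝ :=
  (∑ i, (Gx i * mH l i + Hu i * XG i l - (Hx i * mG l i + Gu i * XH i l))) +
  ∑ i, ∑ j, (Gx i * e i j * XH j l + Hx j * e i j * XG i l)

noncomputable def DUBd (Gx Gu Hx Hu : Fin N → ℝ) (mG mH UG UH : Fin N → Fin N → ℝ)
    (e : Fin N → Fin N → ℝ) (hh : Fin N → Fin N → Fin N → ℝ) (k : Fin N) : ℝ :=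
  (∑ i, (Gx i * UH i k + Hu i * mG i k - (Hx i * UG i k + Gu i * mH i k))) +
  ∑ i, ∑ j, (Gx i * e i j * mH j k + Hx j * (Gx i * hh k i j + e i j * mG i k))

noncomputable def JTd (Fx Fu Gx Gu Hx Hu : Fin N → ℝ)
    (mG mH XG XH UG UH : Fin N → Fin N → ℝ)
    (e : Fin N → Fin N → ℝ) (hh : Fin N → Fin N → Fin N → ℝ) : ℝ :=
  (∑ k, (Fx k * DUBd Gx Gu Hx Hu mG mH UG UH e hh k - DXBd Gx Gu Hx Hu mG mH XG XH e k * Fu k)) +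
  ∑ k, ∑ l, Fx k * e k l * DXBd Gx Gu Hx Hu mG mH XG XH e l

lemma jacobi_algebra (Fx Fu Gx Gu Hx Hu : Fin N → ℝ)
    (mF mG mH XF XG XH UF UG UH : Fin N → Fin N → ℝ)
    (e : Fin N → Fin N → ℝ) (hh : Fin N → Fin N → Fin N → ℝ)
    (hXF : ∀ p q, XF p q = XF q p) (hXG : ∀ p q, XG p q = XG q p)
    (hXH : ∀ p q, XH p q = XH q p)
    (hUF : ∀ p q, UF p q = UF q p) (hUG : ∀ p q, UG p q = UG q p)
    (hUH : ∀ p q, UH p q = UH q p)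
    (he : ∀ p q, e p q = - e q p)
    (hcyc : ∀ p q r, hh p q r + hh q r p + hh r p q = 0) :
    JTd Fx Fu Gx Gu Hx Hu mG mH XG XH UG UH e hh
    + JTd Gx Gu Hx Hu Fx Fu mH mF XH XF UH UF e hh
    + JTd Hx Hu Fx Fu Gx Gu mF mG XF XG UF UG e hh = 0 := by
  simp only [JTd, DXBd, DUBd, mul_add, add_mul, sub_mul, mul_sub, Finset.mul_sum,
    Finset.sum_mul, Finset.sum_add_distrib, Finset.sum_sub_distrib]
  linear_combination
    W1 Fx Gx UH hUH + W1 Gx Hx UF hUF + W1 Hx Fx UG hUG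
    + W2 Fx Hu mG + W2 Gx Fu mH + W2 Hx Gu mF
    - W2 Fx Gu mH - W2 Gx Hu mF - W2 Hx Fu mG
    - W3 Hu Fu XG hXG - W3 Fu Gu XH hXH - W3 Gu Hu XF hXF
    + W4 Fx Gx mH e + W4 Gx Hx mF e + W4 Hx Fx mG e
    + W5 Fx Hx mG e he + W5 Gx Fx mH e he + W5 Hx Gx mF e he
    - W6 Gx Fu XH e hXH - W6 Hx Gu XF e hXF - W6 Fx Hu XG e hXG
    - W7 Fu Hx XG e he hXG - W7 Gu Fx XH e he hXH - W7 Hu Gx XF e he hXF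
    + W8 Fx Gx XH e he hXH + W8 Gx Hx XF e he hXF + W8 Hx Fx XG e he hXG
    + W9 Fx Gx hh Hx hcyc

end Master

def exv (i : Fin N) : Tri N := ((fun l => if l = i then 1 else 0), 0, 0)
def euv (i : Fin N) : Tri N := (0, (fun l => if l = i then 1 else 0), 0)

lemma contDiff_dX {F : Tri N → ℝ} (hF : ContDiff ℝ (⊤:ℕ∞) F) (i : Fin N) :
    ContDiff ℝ (⊤:ℕ∞) (dX i F) := by
  have h1 : ContDiff ℝ (⊤:ℕ∞) (fderiv ℝ F) := hF.fderiv_right (by norm_cast)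
  exact h1.clm_apply contDiff_const
lemma contDiff_dU {F : Tri N → ℝ} (hF : ContDiff ℝ (⊤:ℕ∞) F) (i : Fin N) :
    ContDiff ℝ (⊤:ℕ∞) (dU i F) := by
  have h1 : ContDiff ℝ (⊤:ℕ∞) (fderiv ℝ F) := hF.fderiv_right (by norm_cast)
  exact h1.clm_apply contDiff_const

lemma schwarz {F : Tri N → ℝ} (hF : ContDiff ℝ (⊤:ℕ∞) F) (p v w : Tri N) :
    fderiv ℝ (fun q => fderiv ℝ F q v) p w = fderiv ℝ (fun q => fderiv ℝ F q w) p v := by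
  have h2 : ContDiff ℝ (⊤:ℕ∞) (fderiv ℝ F) := hF.fderiv_right (by norm_cast)
  have hd : DifferentiableAt ℝ (fderiv ℝ F) p := (h2.differentiable (by norm_cast)) p
  have h1 : ∀ u : Tri N, fderiv ℝ (fun q => fderiv ℝ F q u) p
      = (fderiv ℝ (fderiv ℝ F) p).flip u := by
    intro u
    have := fderiv_clm_apply (c := fderiv ℝ F) (u := fun _ => u) hd (differentiableAt_const u)
    simpa using this
  rw [h1 v, h1 w]
  have hsym := (hF.contDiffAt (x := p)).isSymmSndFDerivAt
    (by rw [minSmoothness_of_isRCLikeNormedField];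
        exact WithTop.coe_le_coe.mpr (le_top : (2:ℕ∞) ≤ ⊤))
  exact hsym w v

lemma mixed {F : Tri N → ℝ} (hF : ContDiff ℝ (⊤:ℕ∞) F) (p : Tri N) (i l : Fin N) :
    fderiv ℝ (dU i F) p (exv l) = fderiv ℝ (dX l F) p (euv i) :=
  schwarz hF p (euv i) (exv l)

lemma schwarzX {F : Tri N → ℝ} (hF : ContDiff ℝ (⊤:ℕ∞) F) (p : Tri N) (a b : Fin N) :
    fderiv ℝ (dX a F) p (exv b) = fderiv ℝ (dX b F) p (exv a) :=
  schwarz hF p (exv a) (exv b)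

lemma schwarzU {F : Tri N → ℝ} (hF : ContDiff ℝ (⊤:ℕ∞) F) (p : Tri N) (a b : Fin N) :
    fderiv ℝ (dU a F) p (euv b) = fderiv ℝ (dU b F) p (euv a) :=
  schwarz hF p (euv a) (euv b)

lemma fderiv_bracket_apply' {η : Fin N → Fin N → Tri N → ℝ} {G H : Tri N → ℝ} {p : Tri N}
    (hdXG : ∀ i, DifferentiableAt ℝ (dX i G) p)
    (hdXH : ∀ i, DifferentiableAt ℝ (dX i H) p)
    (hdUG : ∀ i, DifferentiableAt ℝ (dU i G) p)
    (hdUH : ∀ i, DifferentiableAt ℝ (dU i H) p)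
    (hη : ∀ i j, DifferentiableAt ℝ (η i j) p) (v : Tri N) :
    fderiv ℝ (bracketEta η G H) p v =
      (∑ i, (dX i G p * fderiv ℝ (dU i H) p v + dU i H p * fderiv ℝ (dX i G) p v
           - (dX i H p * fderiv ℝ (dU i G) p v + dU i G p * fderiv ℝ (dX i H) p v)))
      + ∑ i, ∑ j, (dX i G p * η i j p * fderiv ℝ (dX j H) p v
          + dX j H p * (dX i G p * fderiv ℝ (η i j) p v + η i j p * fderiv ℝ (dX i G) p v)) := by
  have hA : ∀ i : Fin N, DifferentiableAt ℝ (fun q => dX i G q * dU i H q - dX i H q * dU i G q) p :=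
    fun i => ((hdXG i).mul (hdUH i)).sub ((hdXH i).mul (hdUG i))
  have hB : ∀ i j : Fin N, DifferentiableAt ℝ (fun q => dX i G q * η i j q * dX j H q) p :=
    fun i j => (((hdXG i).mul (hη i j)).mul (hdXH j))
  have hBs : ∀ i : Fin N, DifferentiableAt ℝ (fun q => ∑ j, dX i G q * η i j q * dX j H q) p :=
    fun i => DifferentiableAt.fun_sum (fun j _ => hB i j)
  have e1 : fderiv ℝ (bracketEta η G H) p
      = fderiv ℝ (fun q => (∑ i, (dX i G q * dU i H q - dX i H q * dU i G q))) p
        + fderiv ℝ (fun q => ∑ i, ∑ j, dX i G q * η i j q * dX j H q) p := by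
    rw [show bracketEta η G H = fun q => (∑ i, (dX i G q * dU i H q - dX i H q * dU i G q))
        + ∑ i, ∑ j, dX i G q * η i j q * dX j H q from rfl]
    exact fderiv_fun_add (DifferentiableAt.fun_sum fun i _ => hA i) (DifferentiableAt.fun_sum fun i _ => hBs i)
  rw [e1, ContinuousLinearMap.add_apply, fderiv_fun_sum (fun i _ => hA i),
    fderiv_fun_sum (fun i _ => hBs i), ContinuousLinearMap.sum_apply, ContinuousLinearMap.sum_apply]
  congr 1
  · refine Finset.sum_congr rfl fun i _ => ?_
    rw [fderiv_fun_sub ((hdXG i).fun_mul (hdUH i)) ((hdXH i).fun_mul (hdUG i)),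
      fderiv_fun_mul (hdXG i) (hdUH i), fderiv_fun_mul (hdXH i) (hdUG i)]
    simp only [ContinuousLinearMap.add_apply, ContinuousLinearMap.sub_apply,
      ContinuousLinearMap.smul_apply, smul_eq_mul]
  · refine Finset.sum_congr rfl fun i _ => ?_
    rw [fderiv_fun_sum (fun j _ => hB i j), ContinuousLinearMap.sum_apply]
    refine Finset.sum_congr rfl fun j _ => ?_
    rw [fderiv_fun_mul ((hdXG i).fun_mul (hη i j)) (hdXH j), fderiv_fun_mul (hdXG i) (hη i j)]
    simp only [ContinuousLinearMap.add_apply, ContinuousLinearMap.sub_apply,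
      ContinuousLinearMap.smul_apply, smul_eq_mul]

noncomputable def cx (i : Fin N) : Tri N → ℝ := fun q => q.1 i
noncomputable def cu (i : Fin N) : Tri N → ℝ := fun q => q.2.1 i

noncomputable def Lx (i : Fin N) : Tri N →L[ℝ] ℝ :=
  (ContinuousLinearMap.proj i).comp (ContinuousLinearMap.fst ℝ (Fin N → ℝ) ((Fin N → ℝ) × (Fin N → ℝ)))

noncomputable def Lu (i : Fin N) : Tri N →L[ℝ] ℝ :=
  (ContinuousLinearMap.proj i).comp ((ContinuousLinearMap.fst ℝ (Fin N → ℝ) (Fin N → ℝ)).comp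
    (ContinuousLinearMap.snd ℝ (Fin N → ℝ) ((Fin N → ℝ) × (Fin N → ℝ))))

lemma cx_eq (i : Fin N) : cx i = ⇑(Lx i) := rfl
lemma cu_eq (i : Fin N) : cu i = ⇑(Lu i) := rfl

lemma contDiff_cx (i : Fin N) : ContDiff ℝ (⊤:ℕ∞) (cx i) := by
  rw [cx_eq]; exact (Lx i).contDiff

lemma contDiff_cu (i : Fin N) : ContDiff ℝ (⊤:ℕ∞) (cu i) := by
  rw [cu_eq]; exact (Lu i).contDiff

lemma fderiv_cx (i : Fin N) (p : Tri N) : fderiv ℝ (cx i) p = Lx i := by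
  rw [cx_eq]; exact (Lx i).fderiv

lemma fderiv_cu (i : Fin N) (p : Tri N) : fderiv ℝ (cu i) p = Lu i := by
  rw [cu_eq]; exact (Lu i).fderiv

lemma dX_cx (l i : Fin N) (p : Tri N) : dX l (cx i) p = if i = l then 1 else 0 := by
  show (fderiv ℝ (cx i) p) _ = _
  rw [fderiv_cx]
  simp [Lx]

lemma dU_cx (l i : Fin N) (p : Tri N) : dU l (cx i) p = 0 := by
  show (fderiv ℝ (cx i) p) _ = _
  rw [fderiv_cx]
  simp [Lx]

lemma dX_cu (l i : Fin N) (p : Tri N) : dX l (cu i) p = 0 := by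
  show (fderiv ℝ (cu i) p) _ = _
  rw [fderiv_cu]
  simp [Lu]

lemma dU_cu (l i : Fin N) (p : Tri N) : dU l (cu i) p = if i = l then 1 else 0 := by
  show (fderiv ℝ (cu i) p) _ = _
  rw [fderiv_cu]
  simp [Lu]

lemma dX_const (l : Fin N) (c : ℝ) (p : Tri N) : dX l (fun _ => c) p = 0 := by
  show (fderiv ℝ (fun _ => c) p) _ = _
  rw [fderiv_fun_const]
  simp

lemma dU_const (l : Fin N) (c : ℝ) (p : Tri N) : dU l (fun _ => c) p = 0 := by
  show (fderiv ℝ (fun _ => c) p) _ = _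
  rw [fderiv_fun_const]
  simp

variable {η : Fin N → Fin N → Tri N → ℝ}

lemma brk_cx_any (i : Fin N) (φ : Tri N → ℝ) (p : Tri N) :
    bracketEta η (cx i) φ p = dU i φ p + ∑ m, η i m p * dX m φ p := by
  unfold bracketEta
  simp [dX_cx, dU_cx, ite_mul, zero_mul, one_mul, Finset.sum_ite_eq]

lemma brk_cu_any (k : Fin N) (φ : Tri N → ℝ) :
    bracketEta η (cu k) φ = fun p => -dX k φ p := by
  funext p
  unfold bracketEta
  simp [dX_cu, dU_cu, mul_ite, ite_mul, zero_mul, one_mul, Finset.sum_ite_eq]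

lemma brk_cx_cx (i j : Fin N) :
    bracketEta η (cx i) (cx j) = fun p => η i j p := by
  funext p
  rw [brk_cx_any]
  simp [dX_cx, dU_cx, mul_ite, Finset.sum_ite_eq]

lemma brk_cx_cu (i k : Fin N) :
    bracketEta η (cx i) (cu k) = fun _ => if k = i then 1 else 0 := by
  funext p
  rw [brk_cx_any]
  simp [dX_cu, dU_cu]

lemma brk_cu_cx (k i : Fin N) :
    bracketEta η (cu k) (cx i) = fun _ => -if i = k then 1 else 0 := by
  rw [brk_cu_any]
  funext p
  rw [dX_cx]

lemma brk_any_const (φ : Tri N → ℝ) (c : ℝ) (p : Tri N) :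
    bracketEta η φ (fun _ => c) p = 0 := by
  unfold bracketEta
  simp [dX_const, dU_const]

end JacobiAux

open JacobiAux in
/-- On `U = X × W` (convex open factors), the bracket with canonical
`x`–`u` pairing and extra component `η_{ij} = (xᵢ,xⱼ)` satisfies the Jacobi identity
if and only if `η` is independent of `x` and satisfies the cyclic closedness condition
`∂η_{jk}/∂uᵢ + ∂η_{ki}/∂uⱼ + ∂η_{ij}/∂u_k = 0`. -/
theorem bracket_with_eta_jacobi_iff
    (N : ℕ) (hN : 1 ≤ N)
    (X : Set (Fin N → ℝ)) (W : Set ((Fin N → ℝ) × (Fin N → ℝ)))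
    (hXopen : IsOpen X) (hXconv : Convex ℝ X)
    (hWopen : IsOpen W) (hWconv : Convex ℝ W)
    (η : Fin N → Fin N → Tri N → ℝ)
    (hsmooth : ∀ i j, ContDiffOn ℝ (⊤ : ℕ∞) (η i j) (X ×ˢ W))
    (hanti : ∀ i j, ∀ p ∈ X ×ˢ W, η i j p = - η j i p) :
    (∀ F G H : Tri N → ℝ,
        ContDiff ℝ (⊤ : ℕ∞) F → ContDiff ℝ (⊤ : ℕ∞) G → ContDiff ℝ (⊤ : ℕ∞) H →
        ∀ p ∈ X ×ˢ W,
          bracketEta η F (bracketEta η G H) p +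
          bracketEta η G (bracketEta η H F) p +
          bracketEta η H (bracketEta η F G) p = 0)
    ↔
    ((∀ i j k, ∀ p ∈ X ×ˢ W, dX k (η i j) p = 0) ∧
     (∀ i j k, ∀ p ∈ X ×ˢ W,
        dU i (η j k) p + dU j (η k i) p + dU k (η i j) p = 0)) := by
  have hUopen : IsOpen (X ×ˢ W) := hXopen.prod hWopen
  constructor
  · -- forward
    intro hJac
    have HA : ∀ i j k, ∀ p ∈ X ×ˢ W, dX k (η i j) p = 0 := by
      intro i j k p hp
      have h1 := hJac (cu k) (cx i) (cx j) (contDiff_cu k) (contDiff_cx i) (contDiff_cx j) p hp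
      rw [brk_cx_cx (η := η) i j, brk_cx_cu (η := η) j k, brk_cu_cx (η := η) k i] at h1
      rw [brk_cu_any (η := η) k (η i j), brk_any_const (η := η) (cx i),
        brk_any_const (η := η) (cx j)] at h1
      simpa using h1
    refine ⟨HA, ?_⟩
    intro i j k p hp
    have h1 := hJac (cx i) (cx j) (cx k) (contDiff_cx i) (contDiff_cx j) (contDiff_cx k) p hp
    rw [brk_cx_cx (η := η) j k, brk_cx_cx (η := η) k i, brk_cx_cx (η := η) i j] at h1
    rw [brk_cx_any (η := η) i (η j k) p, brk_cx_any (η := η) j (η k i) p,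
      brk_cx_any (η := η) k (η i j) p] at h1
    have z1 : (∑ m, η i m p * dX m (η j k) p) = 0 :=
      Finset.sum_eq_zero fun m _ => by rw [HA j k m p hp, mul_zero]
    have z2 : (∑ m, η j m p * dX m (η k i) p) = 0 :=
      Finset.sum_eq_zero fun m _ => by rw [HA k i m p hp, mul_zero]
    have z3 : (∑ m, η k m p * dX m (η i j) p) = 0 :=
      Finset.sum_eq_zero fun m _ => by rw [HA i j m p hp, mul_zero]
    rw [z1, z2, z3] at h1
    linarith
  · -- backward
    rintro ⟨ha, hb⟩ F G H hF hG hH p hp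
    have hηdiff : ∀ i j, DifferentiableAt ℝ (η i j) p := by
      intro i j
      refine ((hsmooth i j).contDiffAt (hUopen.mem_nhds hp)).differentiableAt ?_
      simp
    have hXzero : ∀ i j (l : Fin N), fderiv ℝ (η i j) p (exv l) = 0 := fun i j l => ha i j l p hp
    have dAt : ∀ (A : Tri N → ℝ), ContDiff ℝ (⊤:ℕ∞) A →
        (∀ i : Fin N, DifferentiableAt ℝ (dX i A) p) ∧
        (∀ i : Fin N, DifferentiableAt ℝ (dU i A) p) := by
      intro A hA
      have h1 : (1:ℕ∞) ≤ (⊤:ℕ∞) := le_top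
      constructor
      · intro i
        exact ((contDiff_dX hA i).differentiable (by norm_cast)) p
      · intro i
        exact ((contDiff_dU hA i).differentiable (by norm_cast)) p
    have compX : ∀ (A B : Tri N → ℝ), ContDiff ℝ (⊤:ℕ∞) A → ContDiff ℝ (⊤:ℕ∞) B → ∀ l,
        dX l (bracketEta η A B) p =
        DXBd (fun i => dX i A p) (fun i => dU i A p) (fun i => dX i B p) (fun i => dU i B p)
          (fun a b => fderiv ℝ (dX a A) p (euv b)) (fun a b => fderiv ℝ (dX a B) p (euv b))
          (fun a b => fderiv ℝ (dX a A) p (exv b)) (fun a b => fderiv ℝ (dX a B) p (exv b))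
          (fun a b => η a b p) l := by
      intro A B hA hB l
      have h := fderiv_bracket_apply' (dAt A hA).1 (dAt B hB).1 (dAt A hA).2 (dAt B hB).2
        hηdiff (exv l)
      rw [show dX l (bracketEta η A B) p = fderiv ℝ (bracketEta η A B) p (exv l) from rfl, h]
      unfold DXBd
      congr 1
      · exact Finset.sum_congr rfl fun i _ => by rw [mixed hB p i l, mixed hA p i l]
      · exact Finset.sum_congr rfl fun i _ => Finset.sum_congr rfl fun j _ => by
          rw [hXzero i j l]; ring
    have compU : ∀ (A B : Tri N → ℝ), ContDiff ℝ (⊤:ℕ∞) A → ContDiff ℝ (⊤:ℕ∞) B → ∀ k,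
        dU k (bracketEta η A B) p =
        DUBd (fun i => dX i A p) (fun i => dU i A p) (fun i => dX i B p) (fun i => dU i B p)
          (fun a b => fderiv ℝ (dX a A) p (euv b)) (fun a b => fderiv ℝ (dX a B) p (euv b))
          (fun a b => fderiv ℝ (dU a A) p (euv b)) (fun a b => fderiv ℝ (dU a B) p (euv b))
          (fun a b => η a b p) (fun k i j => fderiv ℝ (η i j) p (euv k)) k := by
      intro A B hA hB k
      have h := fderiv_bracket_apply' (dAt A hA).1 (dAt B hB).1 (dAt A hA).2 (dAt B hB).2
        hηdiff (euv k)
      rw [show dU k (bracketEta η A B) p = fderiv ℝ (bracketEta η A B) p (euv k) from rfl, h]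
      unfold DUBd
      rfl
    have outerEq : ∀ (A B C : Tri N → ℝ), ContDiff ℝ (⊤:ℕ∞) A → ContDiff ℝ (⊤:ℕ∞) B →
        ContDiff ℝ (⊤:ℕ∞) C →
        bracketEta η A (bracketEta η B C) p =
        JTd (fun i => dX i A p) (fun i => dU i A p) (fun i => dX i B p) (fun i => dU i B p)
          (fun i => dX i C p) (fun i => dU i C p)
          (fun a b => fderiv ℝ (dX a B) p (euv b)) (fun a b => fderiv ℝ (dX a C) p (euv b))
          (fun a b => fderiv ℝ (dX a B) p (exv b)) (fun a b => fderiv ℝ (dX a C) p (exv b))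
          (fun a b => fderiv ℝ (dU a B) p (euv b)) (fun a b => fderiv ℝ (dU a C) p (euv b))
          (fun a b => η a b p) (fun k i j => fderiv ℝ (η i j) p (euv k)) := by
      intro A B C hA hB hC
      show (∑ k, (dX k A p * dU k (bracketEta η B C) p - dX k (bracketEta η B C) p * dU k A p))
          + (∑ k, ∑ l, dX k A p * η k l p * dX l (bracketEta η B C) p) = _
      unfold JTd
      congr 1
      · exact Finset.sum_congr rfl fun k _ => by rw [compU B C hB hC k, compX B C hB hC k]
      · exact Finset.sum_congr rfl fun k _ => Finset.sum_congr rfl fun l _ => by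
          rw [compX B C hB hC l]
    rw [outerEq F G H hF hG hH, outerEq G H F hG hH hF, outerEq H F G hH hF hG]
    exact jacobi_algebra _ _ _ _ _ _
      (fun a b => fderiv ℝ (dX a F) p (euv b)) _ _
      (fun a b => fderiv ℝ (dX a F) p (exv b)) _ _
      (fun a b => fderiv ℝ (dU a F) p (euv b)) _ _ _ _
      (fun a b => schwarzX hF p a b) (fun a b => schwarzX hG p a b)
      (fun a b => schwarzX hH p a b)
      (fun a b => schwarzU hF p a b) (fun a b => schwarzU hG p a b)
      (fun a b => schwarzU hH p a b)
      (fun a b => hanti a b p hp)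
      (fun a b c => hb a b c p hp)
end

section
/- Fix N ≥ 1. On a connected open set U ⊆ ℝ^N × ℝ^N × ℝ^N with coordinates (x,u,v), let e_{iα} : U → ℝ be smooth functions depending only on (u,v) such that the matrix (e_{iα}(p)) is invertible at every point p ∈ U, and define B₂(F,G) = Σ_{i,α} (∂F/∂xᵢ · e_{iα} · ∂G/∂v_α − ∂G/∂xᵢ · e_{iα} · ∂F/∂v_α) for smooth F,G : U → ℝ. Then a smooth function F : U → ℝ satisfies B₂(F,G) = 0 for all smooth G : U → ℝ if and only if ∂F/∂xᵢ = 0 and ∂F/∂v_α = 0 on U for all i, α (i.e., F depends only on the u-coordinates). -/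
/-- The coordinate function `xⱼ` as a continuous linear map. -/
noncomputable def coordX {N : ℕ} (j : Fin N) : Tri N →L[ℝ] ℝ :=
  (ContinuousLinearMap.proj j).comp (ContinuousLinearMap.fst ℝ _ _)

/-- The coordinate function `vⱼ` as a continuous linear map. -/
noncomputable def coordV {N : ℕ} (j : Fin N) : Tri N →L[ℝ] ℝ :=
  (ContinuousLinearMap.proj j).comp
    ((ContinuousLinearMap.snd ℝ (Fin N → ℝ) (Fin N → ℝ)).comp (ContinuousLinearMap.snd ℝ _ _))

lemma dX_coordX {N : ℕ} (i j : Fin N) (p : Tri N) :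
    dX i (coordX j) p = if j = i then 1 else 0 := by
  rw [dX, (coordX j).fderiv]; simp [coordX]

lemma dV_coordX {N : ℕ} (α j : Fin N) (p : Tri N) :
    dV α (coordX j) p = 0 := by
  rw [dV, (coordX j).fderiv]; simp [coordX]

lemma dX_coordV {N : ℕ} (i j : Fin N) (p : Tri N) :
    dX i (coordV j) p = 0 := by
  rw [dX, (coordV j).fderiv]; simp [coordV]

lemma dV_coordV {N : ℕ} (α j : Fin N) (p : Tri N) :
    dV α (coordV j) p = if j = α then 1 else 0 := by
  rw [dV, (coordV j).fderiv]; simp [coordV]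

/-- For the bracket `B₂` built from a smooth, everywhere invertible matrix
`e_{iα}` depending only on `(u,v)` on a connected open set `U`, a smooth function `F` is
a marked (Casimir) function of `B₂` — i.e. `B₂(F,G) = 0` for all smooth `G` — if and
only if `∂F/∂xᵢ = 0` and `∂F/∂v_α = 0` on `U`, i.e. `F` depends only on `u`. -/
theorem marked_functions_of_bracket2
    (N : ℕ) (hN : 1 ≤ N)
    (U : Set (Tri N)) (hUopen : IsOpen U) (hUconn : IsConnected U)
    (e : Fin N → Fin N → Tri N → ℝ)
    (hesmooth : ∀ i α, ContDiffOn ℝ (⊤ : ℕ∞) (e i α) U)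
    (hex : ∀ i α j, ∀ p ∈ U, dX j (e i α) p = 0)
    (heinv : ∀ p ∈ U, IsUnit (Matrix.of fun i α => e i α p))
    (F : Tri N → ℝ) (hF : ContDiffOn ℝ (⊤ : ℕ∞) F U) :
    (∀ G : Tri N → ℝ, ContDiff ℝ (⊤ : ℕ∞) G → ∀ p ∈ U, bracket2 e F G p = 0)
    ↔
    (∀ p ∈ U, (∀ i, dX i F p = 0) ∧ (∀ α, dV α F p = 0)) := by
  constructor
  · intro h p hp
    set M : Matrix (Fin N) (Fin N) ℝ := Matrix.of fun i α => e i α p with hM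
    have hdet : IsUnit M.det := (Matrix.isUnit_iff_isUnit_det M).mp (heinv p hp)
    -- Test against G = v_β : get rows
    have hrow : ∀ β, ∑ i, dX i F p * e i β p = 0 := by
      intro β
      have := h (coordV β) (coordV β).contDiff p hp
      simpa [bracket2, dX_coordV, dV_coordV, mul_ite, mul_one, mul_zero,
        Finset.sum_ite_eq] using this
    -- Test against G = x_j : get columns
    have hcol : ∀ j, ∑ α, e j α p * dV α F p = 0 := by
      intro j
      have := h (coordX j) (coordX j).contDiff p hp
      have h' : ∑ i, ∑ α, -((if j = i then 1 else 0) * e i α p * dV α F p) = 0 := by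
        simpa [bracket2, dX_coordX, dV_coordX] using this
      simpa [ite_mul, one_mul, zero_mul, Finset.sum_ite_eq, Finset.sum_neg_distrib,
        neg_eq_zero] using h'
    have hX0 : (fun i => dX i F p) = 0 := by
      have h1 : Matrix.vecMul (fun i => dX i F p) M = 0 := by
        funext β
        simpa [Matrix.vecMul, dotProduct, hM] using hrow β
      calc (fun i => dX i F p)
          = Matrix.vecMul (fun i => dX i F p) (M * M⁻¹) := by
            rw [Matrix.mul_nonsing_inv M hdet, Matrix.vecMul_one]
        _ = Matrix.vecMul (Matrix.vecMul (fun i => dX i F p) M) M⁻¹ := by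
            rw [Matrix.vecMul_vecMul]
        _ = 0 := by rw [h1, Matrix.zero_vecMul]
    have hV0 : (fun α => dV α F p) = 0 := by
      have h1 : M.mulVec (fun α => dV α F p) = 0 := by
        funext j
        simpa [Matrix.mulVec, dotProduct, hM] using hcol j
      calc (fun α => dV α F p)
          = (M⁻¹ * M).mulVec (fun α => dV α F p) := by
            rw [Matrix.nonsing_inv_mul M hdet, Matrix.one_mulVec]
        _ = M⁻¹.mulVec (M.mulVec (fun α => dV α F p)) := by
            rw [Matrix.mulVec_mulVec]
        _ = 0 := by rw [h1, Matrix.mulVec_zero]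
    exact ⟨fun i => congrFun hX0 i, fun α => congrFun hV0 α⟩
  · intro h G hG p hp
    obtain ⟨hx, hv⟩ := h p hp
    simp [bracket2, hx, hv]
end

section
/- Fix N ≥ 1. Let A_{ij} : P → ℝ and B_{jα} : Q → ℝ be smooth functions on convex open sets P, Q ⊆ ℝ^N (coordinates u and v respectively), with the matrices (A_{ij}(u)) and (B_{jα}(v)) invertible at every point, and set e_{iα}(u,v) = Σ_j A_{ij}(u)·B_{jα}(v) on P × Q. Then e satisfies the two equations (E1) ∂e_{jα}/∂uᵢ = ∂e_{iα}/∂u_j for all i,j,α, and (E2) Σ_α (e_{iα} · ∂e_{jβ}/∂v_α − e_{jα} · ∂e_{iβ}/∂v_α) = 0 for all i,j,β, if and only if (a) ∂A_{jk}/∂uᵢ = ∂A_{ik}/∂u_j for all i,j,k, and (b) the vector fields Z_j = Σ_α B_{jα} ∂/∂v_α pairwise commute, i.e. Σ_α (B_{jα} · ∂B_{kβ}/∂v_α − B_{kα} · ∂B_{jβ}/∂v_α) = 0 for all j,k,β. -/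
/-- Partial derivative `∂f/∂ξᵢ` of a function of one vector variable. -/
noncomputable def pderiv' {N : ℕ} (i : Fin N) (f : (Fin N → ℝ) → ℝ) (p : Fin N → ℝ) : ℝ :=
  fderiv ℝ f p (fun l => if l = i then 1 else 0)

/-- Partial derivative `∂f/∂uᵢ` in the first factor of `ℝ^N × ℝ^N`. -/
noncomputable def dU2 {N : ℕ} (i : Fin N)
    (f : (Fin N → ℝ) × (Fin N → ℝ) → ℝ) (p : (Fin N → ℝ) × (Fin N → ℝ)) : ℝ :=
  fderiv ℝ f p ((fun l => if l = i then 1 else 0), 0)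

/-- Partial derivative `∂f/∂v_α` in the second factor of `ℝ^N × ℝ^N`. -/
noncomputable def dV2 {N : ℕ} (α : Fin N)
    (f : (Fin N → ℝ) × (Fin N → ℝ) → ℝ) (p : (Fin N → ℝ) × (Fin N → ℝ)) : ℝ :=
  fderiv ℝ f p (0, (fun l => if l = α then 1 else 0))

/-- The reducible matrix `e_{iα}(u,v) = Σⱼ A_{ij}(u) B_{jα}(v)`. -/
noncomputable def eRed {N : ℕ} (A B : Fin N → Fin N → (Fin N → ℝ) → ℝ)
    (i α : Fin N) (p : (Fin N → ℝ) × (Fin N → ℝ)) : ℝ :=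
  ∑ j, A i j p.1 * B j α p.2

/-!
With `e = A(u) B(v)`, condition (E1) says that the row vector `∂ᵢA_{j·} − ∂ⱼA_{i·}` is killed by
`B`, and for each `β` condition (E2) says `A C Aᵀ = 0`, where `C_{kl} = [Z_k, Z_l]^β` is
`(B Gᵀ − G Bᵀ)_{kl}` with `G_{lα} = ∂_α B_{lβ}`. Invertibility of `B` and `A` strips the outer
factors, and since (a) and (b) involve only one of the two variables, they follow by evaluating
(E1) and (E2) at an arbitrary point of the other factor.
-/

open Matrix

namespace Matrix

variable {n m R : Type*} [Fintype m] [CommRing R]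

theorem sum_mul_sub_mul_eq_apply (X Y : Matrix n m R) (i j : n) :
    ∑ α, (X i α * Y j α - X j α * Y i α) = (X * Yᵀ - Y * Xᵀ) i j := by
  simp only [sub_apply, mul_apply, transpose_apply, Finset.sum_sub_distrib, mul_comm (Y _ _)]

theorem mul_mul_transpose_sub_mul_mul_transpose [Fintype n] (M : Matrix n n R)
    (X Y : Matrix n m R) :
    M * X * (M * Y)ᵀ - M * Y * (M * X)ᵀ = M * (X * Yᵀ - Y * Xᵀ) * Mᵀ := by
  simp only [transpose_mul, mul_sub, sub_mul, Matrix.mul_assoc]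

theorem mul_mul_transpose_eq_zero_iff [Fintype n] [DecidableEq n] {M : Matrix n n R}
    (hM : IsUnit M) {C : Matrix n n R} : M * C * Mᵀ = 0 ↔ C = 0 := by
  have hMt : IsUnit Mᵀ := (isUnit_transpose M).2 hM
  rw [hMt.mul_left_eq_zero, hM.mul_right_eq_zero]

end Matrix

section Pointwise

variable {N : ℕ} {A B : Fin N → Fin N → (Fin N → ℝ) → ℝ} {u v : Fin N → ℝ}

theorem hasFDerivAt_eRed {i α : Fin N} (hA : ∀ k, DifferentiableAt ℝ (A i k) u)
    (hB : ∀ k, DifferentiableAt ℝ (B k α) v) :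
    HasFDerivAt (eRed A B i α)
      (∑ k, (A i k u • (fderiv ℝ (B k α) v).comp (ContinuousLinearMap.snd ℝ _ _) +
        B k α v • (fderiv ℝ (A i k) u).comp (ContinuousLinearMap.fst ℝ _ _))) (u, v) :=
  HasFDerivAt.fun_sum fun k _ => by
    have hAk : HasFDerivAt (fun p : (Fin N → ℝ) × (Fin N → ℝ) => A i k p.1)
        ((fderiv ℝ (A i k) u).comp (ContinuousLinearMap.fst ℝ _ _)) (u, v) :=
      (hA k).hasFDerivAt.comp (u, v) hasFDerivAt_fst
    have hBk : HasFDerivAt (fun p : (Fin N → ℝ) × (Fin N → ℝ) => B k α p.2)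
        ((fderiv ℝ (B k α) v).comp (ContinuousLinearMap.snd ℝ _ _)) (u, v) :=
      (hB k).hasFDerivAt.comp (u, v) hasFDerivAt_snd
    exact hAk.mul hBk

theorem dU2_eRed {i j α : Fin N} (hA : ∀ k, DifferentiableAt ℝ (A j k) u)
    (hB : ∀ k, DifferentiableAt ℝ (B k α) v) :
    dU2 i (eRed A B j α) (u, v) = ∑ k, pderiv' i (A j k) u * B k α v := by
  simp [dU2, (hasFDerivAt_eRed hA hB).fderiv, pderiv', mul_comm]

theorem dV2_eRed {i α β : Fin N} (hA : ∀ k, DifferentiableAt ℝ (A i k) u)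
    (hB : ∀ k, DifferentiableAt ℝ (B k β) v) :
    dV2 α (eRed A B i β) (u, v) = ∑ k, A i k u * pderiv' α (B k β) v := by
  simp [dV2, (hasFDerivAt_eRed hA hB).fderiv, pderiv']

theorem dU2_eRed_eq_dU2_eRed_iff {i j : Fin N} (hA : ∀ l k, DifferentiableAt ℝ (A l k) u)
    (hB : ∀ k α, DifferentiableAt ℝ (B k α) v) (hBv : IsUnit (Matrix.of fun k α => B k α v)) :
    (∀ α, dU2 i (eRed A B j α) (u, v) = dU2 j (eRed A B i α) (u, v)) ↔
      ∀ k, pderiv' i (A j k) u = pderiv' j (A i k) u := by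
  simp only [dU2_eRed (hA _ ·) (hB · _)]
  exact funext_iff.symm.trans ((vecMul_injective_of_isUnit hBv).eq_iff.trans funext_iff)

theorem sum_eRed_mul_dV2_eRed_sub_eq_zero_iff {β : Fin N}
    (hA : ∀ i k, DifferentiableAt ℝ (A i k) u) (hB : ∀ k, DifferentiableAt ℝ (B k β) v)
    (hAu : IsUnit (Matrix.of fun i k => A i k u)) :
    (∀ i j, ∑ α, (eRed A B i α (u, v) * dV2 α (eRed A B j β) (u, v) -
        eRed A B j α (u, v) * dV2 α (eRed A B i β) (u, v)) = 0) ↔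
      ∀ j k, ∑ α, (B j α v * pderiv' α (B k β) v - B k α v * pderiv' α (B j β) v) = 0 := by
  set M := Matrix.of fun i k => A i k u
  set X := Matrix.of fun k α => B k α v
  set Y := Matrix.of fun k α => pderiv' α (B k β) v
  have hE : ∀ i j, ∑ α, (eRed A B i α (u, v) * dV2 α (eRed A B j β) (u, v) -
      eRed A B j α (u, v) * dV2 α (eRed A B i β) (u, v)) = (M * (X * Yᵀ - Y * Xᵀ) * Mᵀ) i j := by
    intro i j
    rw [← mul_mul_transpose_sub_mul_mul_transpose, ← sum_mul_sub_mul_eq_apply]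
    simp only [dV2_eRed (hA _) hB]
    rfl
  have hC : ∀ j k, ∑ α, (B j α v * pderiv' α (B k β) v - B k α v * pderiv' α (B j β) v) =
      (X * Yᵀ - Y * Xᵀ) j k :=
    sum_mul_sub_mul_eq_apply X Y
  simp only [hE, hC]
  exact (Matrix.ext_iff.trans (mul_mul_transpose_eq_zero_iff hAu)).trans Matrix.ext_iff.symm

end Pointwise

theorem reducible_e_econd_iff_general
    (N : ℕ)
    (P Q : Set (Fin N → ℝ))
    (hPopen : IsOpen P) (hPne : P.Nonempty)
    (hQopen : IsOpen Q) (hQne : Q.Nonempty)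
    (A B : Fin N → Fin N → (Fin N → ℝ) → ℝ)
    (hAsmooth : ∀ i j, ContDiffOn ℝ (⊤ : ℕ∞) (A i j) P)
    (hBsmooth : ∀ j α, ContDiffOn ℝ (⊤ : ℕ∞) (B j α) Q)
    (hAinv : ∀ u ∈ P, IsUnit (Matrix.of fun i j => A i j u))
    (hBinv : ∀ v ∈ Q, IsUnit (Matrix.of fun j α => B j α v)) :
    ((∀ i j α, ∀ p ∈ P ×ˢ Q, dU2 i (eRed A B j α) p = dU2 j (eRed A B i α) p) ∧
     (∀ i j β, ∀ p ∈ P ×ˢ Q,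
        ∑ α, (eRed A B i α p * dV2 α (eRed A B j β) p -
              eRed A B j α p * dV2 α (eRed A B i β) p) = 0))
    ↔
    ((∀ i j k, ∀ u ∈ P, pderiv' i (A j k) u = pderiv' j (A i k) u) ∧
     (∀ j k β, ∀ v ∈ Q,
        ∑ α, (B j α v * pderiv' α (B k β) v - B k α v * pderiv' α (B j β) v) = 0)) := by
  have hdA : ∀ u ∈ P, ∀ i k, DifferentiableAt ℝ (A i k) u := fun u hu i k =>
    ((hAsmooth i k).contDiffAt (hPopen.mem_nhds hu)).differentiableAt (by simp)
  have hdB : ∀ v ∈ Q, ∀ k α, DifferentiableAt ℝ (B k α) v := fun v hv k α =>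
    ((hBsmooth k α).contDiffAt (hQopen.mem_nhds hv)).differentiableAt (by simp)
  have hE1 : ∀ i j, ∀ u ∈ P, ∀ v ∈ Q, _ := fun i j u hu v hv =>
    dU2_eRed_eq_dU2_eRed_iff (i := i) (j := j) (hdA u hu) (hdB v hv) (hBinv v hv)
  have hE2 : ∀ β, ∀ u ∈ P, ∀ v ∈ Q, _ := fun β u hu v hv =>
    sum_eRed_mul_dV2_eRed_sub_eq_zero_iff (β := β) (hdA u hu) (hdB v hv · β) (hAinv u hu)
  obtain ⟨u₀, hu₀⟩ := hPne
  obtain ⟨v₀, hv₀⟩ := hQne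
  constructor
  · rintro ⟨e1, e2⟩
    exact ⟨fun i j k u hu => (hE1 i j u hu v₀ hv₀).1 (e1 i j · _ ⟨hu, hv₀⟩) k,
      fun j k β v hv => (hE2 β u₀ hu₀ v hv).1 (e2 · · β _ ⟨hu₀, hv⟩) j k⟩
  · rintro ⟨a, b⟩
    exact ⟨fun i j α p hp => (hE1 i j p.1 hp.1 p.2 hp.2).2 (a i j · p.1 hp.1) α,
      fun i j β p hp => (hE2 β p.1 hp.1 p.2 hp.2).2 (b · · β p.2 hp.2) i j⟩

/-- A reducible matrix `e_{iα}(u,v) = Σⱼ A_{ij}(u) B_{jα}(v)`, with both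
factors smooth and everywhere invertible on convex open sets `P`, `Q`, satisfies
(E1) `∂e_{jα}/∂uᵢ = ∂e_{iα}/∂uⱼ` and
(E2) `Σ_α (e_{iα} ∂e_{jβ}/∂v_α − e_{jα} ∂e_{iβ}/∂v_α) = 0`
if and only if (a) `∂A_{jk}/∂uᵢ = ∂A_{ik}/∂uⱼ` and (b) the vector fields
`Zⱼ = Σ_α B_{jα} ∂/∂v_α` pairwise commute. -/
theorem reducible_e_econd_iff
    (N : ℕ) (hN : 1 ≤ N)
    (P Q : Set (Fin N → ℝ))
    (hPopen : IsOpen P) (hPconv : Convex ℝ P) (hPne : P.Nonempty)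
    (hQopen : IsOpen Q) (hQconv : Convex ℝ Q) (hQne : Q.Nonempty)
    (A B : Fin N → Fin N → (Fin N → ℝ) → ℝ)
    (hAsmooth : ∀ i j, ContDiffOn ℝ (⊤ : ℕ∞) (A i j) P)
    (hBsmooth : ∀ j α, ContDiffOn ℝ (⊤ : ℕ∞) (B j α) Q)
    (hAinv : ∀ u ∈ P, IsUnit (Matrix.of fun i j => A i j u))
    (hBinv : ∀ v ∈ Q, IsUnit (Matrix.of fun j α => B j α v)) :
    ((∀ i j α, ∀ p ∈ P ×ˢ Q, dU2 i (eRed A B j α) p = dU2 j (eRed A B i α) p) ∧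
     (∀ i j β, ∀ p ∈ P ×ˢ Q,
        ∑ α, (eRed A B i α p * dV2 α (eRed A B j β) p -
              eRed A B j α p * dV2 α (eRed A B i β) p) = 0))
    ↔
    ((∀ i j k, ∀ u ∈ P, pderiv' i (A j k) u = pderiv' j (A i k) u) ∧
     (∀ j k β, ∀ v ∈ Q,
        ∑ α, (B j α v * pderiv' α (B k β) v - B k α v * pderiv' α (B j β) v) = 0)) :=
  reducible_e_econd_iff_general N P Q hPopen hPne hQopen hQne A B hAsmooth hBsmooth hAinv hBinv
end

section
/- Fix N ≥ 1 and let H : ℝ^N × ℝ^N → ℝ be a smooth function of (u,v). Then H satisfies the four systems of equations (i) Σ_k u_k · ∂²H/∂v_k∂v_α = 0 for all α, (ii) Σ_k v_k · ∂²H/∂u_k∂u_i = 0 for all i, (iii) Σ_k u_k · ∂²H/∂v_k∂u_i = ∂H/∂v_i for all i, (iv) Σ_k v_k · ∂²H/∂u_k∂v_α = ∂H/∂u_α for all α, everywhere on ℝ^N × ℝ^N, if and only if there exist a symmetric real N×N matrix C = (C_{ij}) and a constant c ∈ ℝ such that H(u,v) = Σ_{i,j} C_{ij} u_i v_j + c.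 -/
/-!
Write `Y = ⟨T p, ∇⟩` for the linear vector fields `Y⁺`, `Y⁻`. Covariance says
`D²H(p)(T p, ·) = DH(p) ∘ T`, hence `D(Y H) = 2 DH ∘ T`, and the symmetry of the Hessian of `Y H`
gives `D²H(p)(x, T w) = D²H(p)(w, T x)`. For `Y⁺` and `Y⁻` this kills the `vv`- and `uu`-blocks
of the Hessian and makes its mixed block symmetric; by the symmetry of third derivatives the mixed
block is then constant. Finally the two covariance conditions together express `DH(p)` through the
mixed block at `p`, an Euler-type identity that integrates to `H(u, v) = B(u, v) + H(0)`.
-/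

open ContinuousLinearMap

section General

variable {E G : Type*} [NormedAddCommGroup E] [NormedSpace ℝ E]
  [NormedAddCommGroup G] [NormedSpace ℝ G]

theorem fderiv_apply_const {g : E → E →L[ℝ] G} {p : E} (hg : DifferentiableAt ℝ g p) (v z : E) :
    fderiv ℝ (fun q => g q v) p z = fderiv ℝ g p z v := by
  simp [fderiv_clm_apply hg (differentiableAt_const v)]

theorem fderiv_hessian_symm {f : E → G} (hf : ContDiff ℝ 2 f) (p v w : E) :
    fderiv ℝ (fderiv ℝ f) p v w = fderiv ℝ (fderiv ℝ f) p w v :=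
  hf.contDiffAt.isSymmSndFDerivAt (by simp) v w

theorem fderiv_hessian_apply_comm {f : E → G} (hf : ContDiff ℝ 3 f) (p x y z : E) :
    fderiv ℝ (fun q => fderiv ℝ (fderiv ℝ f) q x y) p z
      = fderiv ℝ (fun q => fderiv ℝ (fderiv ℝ f) q z y) p x := by
  have hd2f := ((hf.fderiv_right (m := 2) (by norm_num)).fderiv_right (m := 1)
    (by norm_num)).differentiable one_ne_zero p
  rw [fderiv_apply_const (hd2f.clm_apply (differentiableAt_const _)),
    fderiv_apply_const (hd2f.clm_apply (differentiableAt_const _)),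
    fderiv_apply_const hd2f, fderiv_apply_const hd2f,
    fderiv_hessian_symm (hf.fderiv_right (m := 2) (by norm_num)) p z x]

/-- For the vector field `Y = ⟨T p, ∇⟩` this says `Y (∂_w f) = ∂_{T w} f` for every direction `w`;
for `T = yPlus` (resp. `yMinus`) it is the pair of systems (i), (iii) (resp. (ii), (iv)). -/
def IsCovariantUnder (T : E →L[ℝ] E) (f : E → ℝ) : Prop :=
  ∀ p, fderiv ℝ (fderiv ℝ f) p (T p) = (fderiv ℝ f p).comp T

namespace IsCovariantUnder

variable {T : E →L[ℝ] E} {f : E → ℝ}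

theorem fderiv_fderiv_apply_self (hf : ContDiff ℝ 2 f) (h : IsCovariantUnder T f) (p : E) :
    fderiv ℝ (fun q => fderiv ℝ f q (T q)) p = (2 : ℝ) • (fderiv ℝ f p).comp T := by
  have hdf := (hf.fderiv_right (m := 1) (by norm_num)).differentiable one_ne_zero p
  ext w
  have := congrArg (fun L => L w) (h p)
  simp only [comp_apply] at this
  simp [fderiv_clm_apply hdf T.differentiableAt, fderiv_hessian_symm hf p w, this, two_smul]

theorem hessian_apply_symm (hf : ContDiff ℝ 3 f) (h : IsCovariantUnder T f) (p x w : E) :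
    fderiv ℝ (fderiv ℝ f) p x (T w) = fderiv ℝ (fderiv ℝ f) p w (T x) := by
  have hdf : ContDiff ℝ 2 (fderiv ℝ f) := hf.fderiv_right (by norm_num)
  have hYf : ContDiff ℝ 2 fun q => fderiv ℝ f q (T q) := hdf.clm_apply T.contDiff
  have hd2f := hdf.differentiable two_ne_zero
  have hessian_Yf : ∀ x w, fderiv ℝ (fderiv ℝ fun q => fderiv ℝ f q (T q)) p x w
      = 2 * fderiv ℝ (fderiv ℝ f) p x (T w) := by
    intro x w
    rw [← fderiv_apply_const ((hYf.fderiv_right (m := 1) (by norm_num)).differentiable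
      one_ne_zero p)]
    simp only [h.fderiv_fderiv_apply_self (hf.of_le (by norm_num)), smul_apply, comp_apply,
      smul_eq_mul]
    rw [fderiv_const_mul ((hd2f p).clm_apply (differentiableAt_const _)), smul_apply,
      fderiv_apply_const (hd2f p), smul_eq_mul]
  have := fderiv_hessian_symm hYf p x w
  rw [hessian_Yf, hessian_Yf] at this
  linarith

end IsCovariantUnder

end General

section ProductSpace

variable {F : Type*} [NormedAddCommGroup F] [NormedSpace ℝ F]

/-- `Y⁺ = Σ u_k ∂/∂v_k`. -/
def yPlus : F × F →L[ℝ] F × F := (inr ℝ F F).comp (fst ℝ F F)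

/-- `Y⁻ = Σ v_k ∂/∂u_k`. -/
def yMinus : F × F →L[ℝ] F × F := (inl ℝ F F).comp (snd ℝ F F)

@[simp] theorem yPlus_apply (p : F × F) : yPlus p = (0, p.1) := rfl

@[simp] theorem yMinus_apply (p : F × F) : yMinus p = (p.2, 0) := rfl

variable {H : F × F → ℝ}

theorem IsCovariantUnder.hessian_mixed_symm (hH : ContDiff ℝ 3 H) (h : IsCovariantUnder yPlus H)
    (p : F × F) (a b : F) :
    fderiv ℝ (fderiv ℝ H) p (a, 0) (0, b) = fderiv ℝ (fderiv ℝ H) p (b, 0) (0, a) :=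
  h.hessian_apply_symm hH p (a, 0) (b, 0)

theorem IsCovariantUnder.hessian_snd_snd_eq_zero (hH : ContDiff ℝ 3 H) (h : IsCovariantUnder yPlus H)
    (p : F × F) (a b : F) : fderiv ℝ (fderiv ℝ H) p (0, a) (0, b) = 0 := by
  simpa [Prod.mk_zero_zero] using h.hessian_apply_symm hH p (0, a) (b, 0)

theorem IsCovariantUnder.hessian_fst_fst_eq_zero (hH : ContDiff ℝ 3 H) (h : IsCovariantUnder yMinus H)
    (p : F × F) (a b : F) : fderiv ℝ (fderiv ℝ H) p (a, 0) (b, 0) = 0 := by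
  simpa [Prod.mk_zero_zero] using h.hessian_apply_symm hH p (a, 0) (0, b)

theorem hessian_mixed_eq_of_isCovariantUnder (hH : ContDiff ℝ 3 H)
    (hp : IsCovariantUnder yPlus H) (hm : IsCovariantUnder yMinus H) (a b : F) (p : F × F) :
    fderiv ℝ (fderiv ℝ H) p (a, 0) (0, b) = fderiv ℝ (fderiv ℝ H) 0 (a, 0) (0, b) := by
  have hd2 : Differentiable ℝ (fderiv ℝ (fderiv ℝ H)) :=
    ((hH.fderiv_right (m := 2) (by norm_num)).fderiv_right (m := 1)
      (by norm_num)).differentiable one_ne_zero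
  refine is_const_of_fderiv_eq_zero
    (fun q => (hd2 q).clm_apply (differentiableAt_const _) |>.clm_apply
      (differentiableAt_const _)) (fun q => ?_) p 0
  refine ContinuousLinearMap.ext fun z => ?_
  rw [show z = (z.1, 0) + (0, z.2) by simp, map_add]
  have hsymm : (fun q => fderiv ℝ (fderiv ℝ H) q (a, 0) (0, b))
      = fun q => fderiv ℝ (fderiv ℝ H) q (0, b) (a, 0) :=
    funext fun q => fderiv_hessian_symm (hH.of_le (by norm_num)) q _ _
  -- Swap until two directions from the same factor meet in the Hessian, where it vanishes.
  rw [fderiv_hessian_apply_comm hH q (a, 0) (0, b) (0, z.2), hsymm,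
    fderiv_hessian_apply_comm hH q (0, b) (a, 0) (z.1, 0)]
  simp [hp.hessian_snd_snd_eq_zero hH, hm.hessian_fst_fst_eq_zero hH]

theorem fderiv_apply_eq_hessian_mixed (hH : ContDiff ℝ 3 H)
    (hp : IsCovariantUnder yPlus H) (hm : IsCovariantUnder yMinus H) (p x : F × F) :
    fderiv ℝ H p x
      = fderiv ℝ (fderiv ℝ H) p (p.1, 0) (0, x.2) + fderiv ℝ (fderiv ℝ H) p (x.1, 0) (0, p.2) := by
  have hv := congrArg (fun L => L (x.2, 0)) (hp p)
  have hu := congrArg (fun L => L (0, x.1)) (hm p)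
  simp only [comp_apply, yPlus_apply, yMinus_apply] at hu hv
  have hx : fderiv ℝ H p x = fderiv ℝ H p (x.1, 0) + fderiv ℝ H p (0, x.2) := by
    rw [← map_add]; simp
  rw [hx, ← hu, ← hv, fderiv_hessian_symm (hH.of_le (by norm_num)) p (0, p.1),
    hp.hessian_mixed_symm hH p x.2, hp.hessian_mixed_symm hH p p.2]
  ring

theorem fderiv_bilinear_apply (B : F →L[ℝ] F →L[ℝ] ℝ) (p x : F × F) :
    fderiv ℝ (fun q : F × F => B q.1 q.2) p x = B p.1 x.2 + B x.1 p.2 := by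
  rw [B.isBoundedBilinearMap.fderiv p]
  rfl

theorem hessian_bilinear_add_const_apply (B : F →L[ℝ] F →L[ℝ] ℝ) (c : ℝ) (p y x : F × F) :
    fderiv ℝ (fderiv ℝ fun q : F × F => B q.1 q.2 + c) p y x = B y.1 x.2 + B x.1 y.2 := by
  have : fderiv ℝ (fun q : F × F => B q.1 q.2 + c) = fun q => B.isBoundedBilinearMap.deriv q :=
    funext fun q => by rw [fderiv_add_const]; exact B.isBoundedBilinearMap.fderiv q
  rw [this, B.isBoundedBilinearMap.isBoundedLinearMap_deriv.fderiv]
  rfl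

theorem exists_symm_bilinear_of_isCovariantUnder (hH : ContDiff ℝ 3 H)
    (hp : IsCovariantUnder yPlus H) (hm : IsCovariantUnder yMinus H) :
    ∃ B : F →L[ℝ] F →L[ℝ] ℝ, (∀ a b, B a b = B b a) ∧ ∀ p, H p = B p.1 p.2 + H 0 := by
  set B := (fderiv ℝ (fderiv ℝ H) 0).bilinearComp (inl ℝ F F) (inr ℝ F F) with hB
  refine ⟨B, hp.hessian_mixed_symm hH 0, fun p => ?_⟩
  have hdiff : Differentiable ℝ fun q : F × F => H q - B q.1 q.2 :=
    (hH.differentiable (by norm_num)).sub B.isBoundedBilinearMap.differentiable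
  have hderiv : ∀ q, fderiv ℝ (fun q : F × F => H q - B q.1 q.2) q = 0 := by
    intro q
    refine ContinuousLinearMap.ext fun x => ?_
    rw [fderiv_fun_sub (hH.differentiable (by norm_num) q)
      (B.isBoundedBilinearMap.differentiableAt q), sub_apply, fderiv_bilinear_apply,
      fderiv_apply_eq_hessian_mixed hH hp hm, hessian_mixed_eq_of_isCovariantUnder hH hp hm q.1,
      hessian_mixed_eq_of_isCovariantUnder hH hp hm x.1]
    simp [hB]
  have := is_const_of_fderiv_eq_zero hdiff hderiv p 0
  simp only [Prod.fst_zero, Prod.snd_zero, map_zero, sub_zero] at this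
  linarith

theorem isCovariantUnder_yPlus_bilinear_add_const (B : F →L[ℝ] F →L[ℝ] ℝ)
    (hB : ∀ a b, B a b = B b a) (c : ℝ) :
    IsCovariantUnder yPlus fun q : F × F => B q.1 q.2 + c := by
  intro p
  refine ContinuousLinearMap.ext fun w => ?_
  simp [hessian_bilinear_add_const_apply, fderiv_add_const, fderiv_bilinear_apply, hB w.1]

theorem isCovariantUnder_yMinus_bilinear_add_const (B : F →L[ℝ] F →L[ℝ] ℝ)
    (hB : ∀ a b, B a b = B b a) (c : ℝ) :
    IsCovariantUnder yMinus fun q : F × F => B q.1 q.2 + c := by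
  intro p
  refine ContinuousLinearMap.ext fun w => ?_
  simp [hessian_bilinear_add_const_apply, fderiv_add_const, fderiv_bilinear_apply, hB p.2]

end ProductSpace

section Coordinates

variable {N : ℕ}

theorem ContinuousLinearMap.apply_mk_zero_eq_sum (L : (Fin N → ℝ) × (Fin N → ℝ) →L[ℝ] ℝ)
    (a : Fin N → ℝ) : L (a, 0) = ∑ k, a k * L (fun l => if l = k then 1 else 0, 0) := by
  have : ((a, 0) : (Fin N → ℝ) × (Fin N → ℝ))
      = ∑ k, a k • ((fun l => if l = k then 1 else 0), 0) := by
    ext l <;> simp [Prod.fst_sum, Prod.snd_sum, Finset.sum_apply]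
  rw [this, map_sum]
  simp only [map_smul, smul_eq_mul]

theorem ContinuousLinearMap.apply_zero_mk_eq_sum (L : (Fin N → ℝ) × (Fin N → ℝ) →L[ℝ] ℝ)
    (a : Fin N → ℝ) : L (0, a) = ∑ k, a k * L (0, fun l => if l = k then 1 else 0) := by
  have : ((0, a) : (Fin N → ℝ) × (Fin N → ℝ))
      = ∑ k, a k • (0, (fun l => if l = k then 1 else 0)) := by
    ext l <;> simp [Prod.fst_sum, Prod.snd_sum, Finset.sum_apply]
  rw [this, map_sum]
  simp only [map_smul, smul_eq_mul]

theorem ContinuousLinearMap.ext_iff_stdBasis {L L' : (Fin N → ℝ) × (Fin N → ℝ) →L[ℝ] ℝ} :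
    L = L' ↔
      (∀ i, L (fun l => if l = i then 1 else 0, 0) = L' (fun l => if l = i then 1 else 0, 0)) ∧
      ∀ i, L (0, fun l => if l = i then 1 else 0) = L' (0, fun l => if l = i then 1 else 0) := by
  refine ⟨by rintro rfl; simp, fun ⟨hu, hv⟩ => ContinuousLinearMap.ext fun x => ?_⟩
  rw [show x = (x.1, 0) + (0, x.2) by simp, map_add, map_add, apply_mk_zero_eq_sum,
    apply_mk_zero_eq_sum L', apply_zero_mk_eq_sum, apply_zero_mk_eq_sum L']
  simp only [hu, hv]

theorem sum_mul_dU2 (g : (Fin N → ℝ) × (Fin N → ℝ) → ℝ) (a : Fin N → ℝ)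
    (p : (Fin N → ℝ) × (Fin N → ℝ)) : ∑ k, a k * dU2 k g p = fderiv ℝ g p (a, 0) :=
  ((fderiv ℝ g p).apply_mk_zero_eq_sum a).symm

theorem sum_mul_dV2 (g : (Fin N → ℝ) × (Fin N → ℝ) → ℝ) (a : Fin N → ℝ)
    (p : (Fin N → ℝ) × (Fin N → ℝ)) : ∑ k, a k * dV2 k g p = fderiv ℝ g p (0, a) :=
  ((fderiv ℝ g p).apply_zero_mk_eq_sum a).symm

variable {H : (Fin N → ℝ) × (Fin N → ℝ) → ℝ}

theorem isCovariantUnder_yPlus_iff (hH : ContDiff ℝ 2 H) :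
    IsCovariantUnder yPlus H ↔
      (∀ α p, ∑ k, p.1 k * dV2 k (fun q => dV2 α H q) p = 0) ∧
      ∀ i p, ∑ k, p.1 k * dV2 k (fun q => dU2 i H q) p = dV2 i H p := by
  have hd := (hH.fderiv_right (m := 1) le_rfl).differentiable one_ne_zero
  simp only [sum_mul_dV2]
  simp only [dV2, dU2, fderiv_apply_const (hd _)]
  simp only [IsCovariantUnder, ContinuousLinearMap.ext_iff_stdBasis, forall_and, comp_apply,
    yPlus_apply, Prod.mk_zero_zero, map_zero]
  rw [and_comm]
  exact forall_comm.and forall_comm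

theorem isCovariantUnder_yMinus_iff (hH : ContDiff ℝ 2 H) :
    IsCovariantUnder yMinus H ↔
      (∀ i p, ∑ k, p.2 k * dU2 k (fun q => dU2 i H q) p = 0) ∧
      ∀ α p, ∑ k, p.2 k * dU2 k (fun q => dV2 α H q) p = dU2 α H p := by
  have hd := (hH.fderiv_right (m := 1) le_rfl).differentiable one_ne_zero
  simp only [sum_mul_dU2]
  simp only [dV2, dU2, fderiv_apply_const (hd _)]
  simp only [IsCovariantUnder, ContinuousLinearMap.ext_iff_stdBasis, forall_and, comp_apply,
    yMinus_apply, Prod.mk_zero_zero, map_zero]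
  exact forall_comm.and forall_comm

theorem ContinuousLinearMap.bilinear_apply_eq_sum (B : (Fin N → ℝ) →L[ℝ] (Fin N → ℝ) →L[ℝ] ℝ)
    (u v : Fin N → ℝ) : B u v = ∑ i, ∑ j, B (Pi.single i 1) (Pi.single j 1) * u i * v j := by
  conv_lhs => rw [pi_eq_sum_univ' u, pi_eq_sum_univ' v]
  simp [map_sum, Finset.mul_sum, mul_comm, mul_left_comm]
  rw [Finset.sum_comm]

theorem exists_matrix_iff_exists_bilinear :
    (∃ (C : Matrix (Fin N) (Fin N) ℝ) (c : ℝ), C.IsSymm ∧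
        ∀ p : (Fin N → ℝ) × (Fin N → ℝ), H p = (∑ i, ∑ j, C i j * p.1 i * p.2 j) + c) ↔
      ∃ (B : (Fin N → ℝ) →L[ℝ] (Fin N → ℝ) →L[ℝ] ℝ) (c : ℝ), (∀ a b, B a b = B b a) ∧
        ∀ p : (Fin N → ℝ) × (Fin N → ℝ), H p = B p.1 p.2 + c := by
  constructor
  · rintro ⟨C, c, hC, hH⟩
    set B := (Matrix.toLinearMap₂' ℝ C :
      (Fin N → ℝ) →ₗ[ℝ] (Fin N → ℝ) →ₗ[ℝ] ℝ).toContinuousBilinearMap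
    have hBC : ∀ u v, B u v = ∑ i, ∑ j, C i j * u i * v j := fun u v => by
      simp [B, Matrix.toLinearMap₂'_apply, mul_comm, mul_left_comm]
    refine ⟨B, c, fun a b => ?_, fun p => by rw [hH, hBC]⟩
    rw [hBC, hBC, Finset.sum_comm]
    simp only [hC.apply]
    exact Finset.sum_congr rfl fun i _ => Finset.sum_congr rfl fun j _ => mul_right_comm _ _ _
  · rintro ⟨B, c, hB, hH⟩
    refine ⟨Matrix.of fun i j => B (Pi.single i 1) (Pi.single j 1), c,
      Matrix.IsSymm.ext fun i j => hB _ _, fun p => ?_⟩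
    rw [hH, B.bilinear_apply_eq_sum]
    rfl

end Coordinates

theorem sp2_covariance_forces_bilinear_H_general
    (N : ℕ)
    (H : (Fin N → ℝ) × (Fin N → ℝ) → ℝ)
    (hH : ContDiff ℝ (⊤ : ℕ∞) H) :
    ((∀ α : Fin N, ∀ p : (Fin N → ℝ) × (Fin N → ℝ),
        ∑ k, p.1 k * dV2 k (fun q => dV2 α H q) p = 0) ∧
     (∀ i : Fin N, ∀ p : (Fin N → ℝ) × (Fin N → ℝ),
        ∑ k, p.2 k * dU2 k (fun q => dU2 i H q) p = 0) ∧
     (∀ i : Fin N, ∀ p : (Fin N → ℝ) × (Fin N → ℝ),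
        ∑ k, p.1 k * dV2 k (fun q => dU2 i H q) p = dV2 i H p) ∧
     (∀ α : Fin N, ∀ p : (Fin N → ℝ) × (Fin N → ℝ),
        ∑ k, p.2 k * dU2 k (fun q => dV2 α H q) p = dU2 α H p))
    ↔
    (∃ (C : Matrix (Fin N) (Fin N) ℝ) (c : ℝ), C.IsSymm ∧
        ∀ p : (Fin N → ℝ) × (Fin N → ℝ),
          H p = (∑ i, ∑ j, C i j * p.1 i * p.2 j) + c) := by
  have hH3 : ContDiff ℝ 3 H := hH.of_le (WithTop.coe_le_coe.2 le_top)
  have hH2 : ContDiff ℝ 2 H := hH.of_le (WithTop.coe_le_coe.2 le_top)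
  rw [exists_matrix_iff_exists_bilinear]
  constructor
  · rintro ⟨h1, h2, h3, h4⟩
    obtain ⟨B, hB, hHB⟩ := exists_symm_bilinear_of_isCovariantUnder hH3
      ((isCovariantUnder_yPlus_iff hH2).2 ⟨h1, h3⟩) ((isCovariantUnder_yMinus_iff hH2).2 ⟨h2, h4⟩)
    exact ⟨B, H 0, hB, hHB⟩
  · rintro ⟨B, c, hB, hHB⟩
    obtain rfl : H = fun p => B p.1 p.2 + c := funext hHB
    obtain ⟨h1, h3⟩ := (isCovariantUnder_yPlus_iff hH2).1
      (isCovariantUnder_yPlus_bilinear_add_const B hB c)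
    obtain ⟨h2, h4⟩ := (isCovariantUnder_yMinus_iff hH2).1
      (isCovariantUnder_yMinus_bilinear_add_const B hB c)
    exact ⟨h1, h2, h3, h4⟩

/-- A smooth function `H(u,v)` on `ℝ^N × ℝ^N` satisfies the four systems
(i) `Σ_k u_k ∂²H/∂v_k∂v_α = 0`, (ii) `Σ_k v_k ∂²H/∂u_k∂u_i = 0`,
(iii) `Σ_k u_k ∂²H/∂v_k∂u_i = ∂H/∂v_i`, (iv) `Σ_k v_k ∂²H/∂u_k∂v_α = ∂H/∂u_α`
everywhere, if and only if `H(u,v) = Σ_{i,j} C_{ij} u_i v_j + c` for some symmetric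
real `N×N` matrix `C` and constant `c`. -/
theorem sp2_covariance_forces_bilinear_H
    (N : ℕ) (hN : 1 ≤ N)
    (H : (Fin N → ℝ) × (Fin N → ℝ) → ℝ)
    (hH : ContDiff ℝ (⊤ : ℕ∞) H) :
    ((∀ α : Fin N, ∀ p : (Fin N → ℝ) × (Fin N → ℝ),
        ∑ k, p.1 k * dV2 k (fun q => dV2 α H q) p = 0) ∧
     (∀ i : Fin N, ∀ p : (Fin N → ℝ) × (Fin N → ℝ),
        ∑ k, p.2 k * dU2 k (fun q => dU2 i H q) p = 0) ∧
     (∀ i : Fin N, ∀ p : (Fin N → ℝ) × (Fin N → ℝ),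
        ∑ k, p.1 k * dV2 k (fun q => dU2 i H q) p = dV2 i H p) ∧
     (∀ α : Fin N, ∀ p : (Fin N → ℝ) × (Fin N → ℝ),
        ∑ k, p.2 k * dU2 k (fun q => dV2 α H q) p = dU2 α H p))
    ↔
    (∃ (C : Matrix (Fin N) (Fin N) ℝ) (c : ℝ), C.IsSymm ∧
        ∀ p : (Fin N → ℝ) × (Fin N → ℝ),
          H p = (∑ i, ∑ j, C i j * p.1 i * p.2 j) + c) :=
  sp2_covariance_forces_bilinear_H_general N H hH
end
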